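/- arXiv:1708.04845 — 2 statements merged into one kernel-verified Lean document; each statement's English description precedes it below -/
import Mathlib

section
/- In any parity game, exactly one of the two players has a winning strategy from each position, and moreover positional (memoryless) strategies suffice: the winning player always has a positional winning strategy. -/
attribute [local instance 10] Classical.propDecidable

/-! ## Syntax of the modal μ-calculus -/

inductive MuFormula : Type
  | top | bot
  | prop : ℕ → MuFormula
  | nprop : ℕ → MuFormula
  | var : ℕ → MuFormula
  | and : MuFormula → MuFormula → MuFormula
  | or : MuFormula → MuFormula → MuFormula
  | dia : MuFormula → MuFormula
  | box : MuFormula → MuFormula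
  | mu : ℕ → MuFormula → MuFormula
  | nu : ℕ → MuFormula → MuFormula
  deriving DecidableEq

/-- Fixpoint-free (modal) formulas. -/
def IsModal : MuFormula → Prop
  | .mu _ _ | .nu _ _ | .var _ => False
  | .and φ ψ | .or φ ψ => IsModal φ ∧ IsModal ψ
  | .dia φ | .box φ => IsModal φ
  | _ => True

/-- Modal depth: maximal nesting of modalities. -/
def mdepth : MuFormula → ℕ
  | .and φ ψ | .or φ ψ => max (mdepth φ) (mdepth ψ)
  | .dia φ | .box φ => mdepth φ + 1
  | .mu _ φ | .nu _ φ => mdepth φ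
  | _ => 0

/-- Free fixpoint variables. -/
def MuFormula.freeVars : MuFormula → Finset ℕ
  | .var X => {X}
  | .and φ ψ | .or φ ψ => φ.freeVars ∪ ψ.freeVars
  | .dia φ | .box φ => φ.freeVars
  | .mu X φ | .nu X φ => φ.freeVars.erase X
  | _ => ∅

/-- Bound fixpoint variables. -/
def MuFormula.boundVars : MuFormula → Finset ℕ
  | .and φ ψ | .or φ ψ => φ.boundVars ∪ ψ.boundVars
  | .dia φ | .box φ => φ.boundVars
  | .mu X φ | .nu X φ => insert X φ.boundVars
  | _ => ∅

/-- Capture-naive substitution of a closed formula for a variable. -/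
def MuFormula.subst : MuFormula → ℕ → MuFormula → MuFormula
  | .var Y, X, ρ => if Y = X then ρ else .var Y
  | .top, _, _ => .top
  | .bot, _, _ => .bot
  | .prop P, _, _ => .prop P
  | .nprop P, _, _ => .nprop P
  | .and φ ψ, X, ρ => .and (φ.subst X ρ) (ψ.subst X ρ)
  | .or φ ψ, X, ρ => .or (φ.subst X ρ) (ψ.subst X ρ)
  | .dia φ, X, ρ => .dia (φ.subst X ρ)
  | .box φ, X, ρ => .box (φ.subst X ρ)
  | .mu Y φ, X, ρ => if Y = X then .mu Y φ else .mu Y (φ.subst X ρ)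
  | .nu Y φ, X, ρ => if Y = X then .nu Y φ else .nu Y (φ.subst X ρ)

/-- A variable occurs only guarded (under a modality) in a formula. -/
def guardedIn (X : ℕ) : MuFormula → Prop
  | .var Y => Y ≠ X
  | .and φ ψ | .or φ ψ => guardedIn X φ ∧ guardedIn X ψ
  | .dia _ | .box _ => True
  | .mu _ φ | .nu _ φ => guardedIn X φ
  | _ => True

/-- Guarded formulas: every fixpoint variable is under a modality within its binding. -/
def Guarded : MuFormula → Prop
  | .mu X φ | .nu X φ => guardedIn X φ ∧ Guarded φ
  | .and φ ψ | .or φ ψ => Guarded φ ∧ Guarded ψ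
  | .dia φ | .box φ => Guarded φ
  | _ => True

/-- A priority assignment is order-preserving and parity-correct for a formula:
μ-bound variables get odd priorities, ν-bound even, and whenever `Y` is free in
the formula binding `X` then `Ω Y ≥ Ω X`. -/
def ParityOK (Ω : ℕ → ℕ) : MuFormula → Prop
  | .mu X φ => Ω X % 2 = 1 ∧ (∀ Y ∈ φ.freeVars, Ω X ≤ Ω Y) ∧ ParityOK Ω φ
  | .nu X φ => Ω X % 2 = 0 ∧ (∀ Y ∈ φ.freeVars, Ω X ≤ Ω Y) ∧ ParityOK Ω φ
  | .and φ ψ | .or φ ψ => ParityOK Ω φ ∧ ParityOK Ω ψ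
  | .dia φ | .box φ => ParityOK Ω φ
  | _ => True

/-- A formula has index `I` if it has an order-preserving priority assignment with co-domain `I`. -/
def HasIndex (φ : MuFormula) (I : Finset ℕ) : Prop :=
  ∃ Ω : ℕ → ℕ, ParityOK Ω φ ∧ ∀ X ∈ φ.boundVars, Ω X ∈ I

/-! ## Trees and semantics -/

structure KripkeTree where
  S : Type
  E : S → S → Prop
  root : S
  label : S → ℕ → Prop

/-- Knaster–Tarski semantics of `L_μ` on a tree, with an environment for free variables. -/
def KripkeTree.sat (T : KripkeTree) : MuFormula → (ℕ → Set T.S) → Set T.S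
  | .top, _ => Set.univ
  | .bot, _ => ∅
  | .prop P, _ => {s | T.label s P}
  | .nprop P, _ => {s | ¬ T.label s P}
  | .var X, e => e X
  | .and φ ψ, e => T.sat φ e ∩ T.sat ψ e
  | .or φ ψ, e => T.sat φ e ∪ T.sat ψ e
  | .dia φ, e => {s | ∃ t, T.E s t ∧ t ∈ T.sat φ e}
  | .box φ, e => {s | ∀ t, T.E s t → t ∈ T.sat φ e}
  | .mu X φ, e => ⋂₀ {A | T.sat φ (Function.update e X A) ⊆ A}
  | .nu X φ, e => ⋃₀ {A | A ⊆ T.sat φ (Function.update e X A)}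

def KripkeTree.Models (T : KripkeTree) (φ : MuFormula) : Prop :=
  T.root ∈ T.sat φ (fun _ => ∅)

/-- Two formulas are equivalent if satisfied by exactly the same trees. -/
def MuEquiv (φ ψ : MuFormula) : Prop := ∀ T : KripkeTree, T.Models φ ↔ T.Models ψ

/-- The truncation `T|^m` of a tree to depth `m`. -/
def truncate (T : KripkeTree) (m : ℕ) : KripkeTree where
  S := T.S × ℕ
  E := fun x y => x.2 < m ∧ T.E x.1 y.1 ∧ y.2 = x.2 + 1
  root := (T.root, 0)
  label := fun x p => T.label x.1 p

/-- Isomorphism of labelled trees. -/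
def KripkeTree.Iso (T₁ T₂ : KripkeTree) : Prop :=
  ∃ f : T₁.S ≃ T₂.S, f T₁.root = T₂.root ∧
    (∀ s t, T₁.E s t ↔ T₂.E (f s) (f t)) ∧
    (∀ s P, T₁.label s P ↔ T₂.label (f s) P)

/-! ## Parity games -/

structure ParityGame where
  V : Type
  evenOwns : V → Prop
  E : V → V → Prop
  init : V
  prio : V → ℕ

namespace ParityGame

variable (G : ParityGame)

def Terminal (v : G.V) : Prop := ∀ w, ¬ G.E v w

/-- A maximal play from `v₀`, encoded with `none` after a finite play has ended. -/
def IsPlayFrom (v₀ : G.V) (p : ℕ → Option G.V) : Prop :=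
  p 0 = some v₀ ∧
  (∀ n, p n = none → p (n+1) = none) ∧
  ∀ n v, p n = some v →
    (G.Terminal v → p (n+1) = none) ∧
    (¬ G.Terminal v → ∃ w, G.E v w ∧ p (n+1) = some w)

def Infinite (p : ℕ → Option G.V) : Prop := ∀ n, p n ≠ none

def OccursInfinitely (p : ℕ → Option G.V) (d : ℕ) : Prop :=
  ∀ N, ∃ n ≥ N, ∃ v, p n = some v ∧ G.prio v = d

/-- `d` is the dominant priority of a play. -/
def Dominant (p : ℕ → Option G.V) (d : ℕ) : Prop :=
  G.OccursInfinitely p d ∧ ∀ d', G.OccursInfinitely p d' → d' ≤ d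

def EvenWinsPlay (p : ℕ → Option G.V) : Prop :=
  (∃ n v, p n = some v ∧ G.Terminal v ∧ ¬ G.evenOwns v) ∨
  (G.Infinite p ∧ ∃ d, G.Dominant p d ∧ d % 2 = 0)

def OddWinsPlay (p : ℕ → Option G.V) : Prop :=
  (∃ n v, p n = some v ∧ G.Terminal v ∧ G.evenOwns v) ∨
  (G.Infinite p ∧ ∃ d, G.Dominant p d ∧ d % 2 = 1)

/-- A positional strategy for the player owning the positions in `owner`
chooses a successor at each such non-terminal position. -/
def ValidFor (owner : G.V → Prop) (σ : G.V → G.V) : Prop :=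
  ∀ v, owner v → ¬ G.Terminal v → G.E v (σ v)

def Agrees (owner : G.V → Prop) (σ : G.V → G.V) (p : ℕ → Option G.V) : Prop :=
  ∀ n v, p n = some v → owner v → ¬ G.Terminal v → p (n+1) = some (σ v)

/-- Even has a positional winning strategy from `v₀`. -/
def EvenWinsFrom (v₀ : G.V) : Prop :=
  ∃ σ : G.V → G.V, G.ValidFor G.evenOwns σ ∧
    ∀ p, G.IsPlayFrom v₀ p → G.Agrees G.evenOwns σ p → G.EvenWinsPlay p

/-- Odd has a positional winning strategy from `v₀`. -/
def OddWinsFrom (v₀ : G.V) : Prop :=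
  ∃ τ : G.V → G.V, G.ValidFor (fun v => ¬ G.evenOwns v) τ ∧
    ∀ p, G.IsPlayFrom v₀ p → G.Agrees (fun v => ¬ G.evenOwns v) τ p → G.OddWinsPlay p

def EvenWins : Prop := G.EvenWinsFrom G.init

/-! General (history-dependent) strategies. -/

/-- The history of a play up to time `n`. -/
def hist (p : ℕ → Option G.V) (n : ℕ) : List G.V :=
  (List.range (n+1)).filterMap p

def GValidFor (owner : G.V → Prop) (σ : List G.V → G.V) : Prop :=
  ∀ (l : List G.V) (v : G.V), owner v → ¬ G.Terminal v → G.E v (σ (l ++ [v]))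

def GAgrees (owner : G.V → Prop) (σ : List G.V → G.V) (p : ℕ → Option G.V) : Prop :=
  ∀ n v, p n = some v → owner v → ¬ G.Terminal v → p (n+1) = some (σ (G.hist p n))

/-- Even has a (general, history-dependent) winning strategy from `v₀`. -/
def GEvenWinsFrom (v₀ : G.V) : Prop :=
  ∃ σ : List G.V → G.V, G.GValidFor G.evenOwns σ ∧
    ∀ p, G.IsPlayFrom v₀ p → G.GAgrees G.evenOwns σ p → G.EvenWinsPlay p

/-- Odd has a (general, history-dependent) winning strategy from `v₀`. -/
def GOddWinsFrom (v₀ : G.V) : Prop :=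
  ∃ τ : List G.V → G.V, G.GValidFor (fun v => ¬ G.evenOwns v) τ ∧
    ∀ p, G.IsPlayFrom v₀ p → G.GAgrees (fun v => ¬ G.evenOwns v) τ p → G.OddWinsPlay p

end ParityGame

/-! ## Model-checking games -/

/-- Whether the outermost connective of a formula is a modality. -/
def isModalTop : MuFormula → Prop
  | .dia _ | .box _ => True
  | _ => False

/-- The model-checking parity game arena `T × Ψ`, with priority assignment `Ω`
on fixpoint variables and minimal priority `minp` elsewhere. -/
def mcGame (T : KripkeTree) (Ψ : MuFormula) (Ω : ℕ → ℕ) (minp : ℕ) : ParityGame where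
  V := T.S × MuFormula
  evenOwns := fun x =>
    match x.2 with
    | .and _ _ => False
    | .box _ => False
    | .top => False
    | .prop P => ¬ T.label x.1 P
    | .nprop P => T.label x.1 P
    | _ => True
  E := fun x y =>
    match x.2 with
    | .and φ ψ => y.1 = x.1 ∧ (y.2 = φ ∨ y.2 = ψ)
    | .or φ ψ => y.1 = x.1 ∧ (y.2 = φ ∨ y.2 = ψ)
    | .dia φ => T.E x.1 y.1 ∧ y.2 = φ
    | .box φ => T.E x.1 y.1 ∧ y.2 = φ
    | .mu X φ => y.1 = x.1 ∧ y.2 = φ.subst X (.mu X φ)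
    | .nu X φ => y.1 = x.1 ∧ y.2 = φ.subst X (.nu X φ)
    | _ => False
  init := (T.root, Ψ)
  prio := fun x =>
    match x.2 with
    | .mu X _ => Ω X
    | .nu X _ => Ω X
    | _ => minp

/-- Encoding of a parity game arena as a labelled tree: proposition `3*i+1` (written `E_i`)
marks Even's positions of priority `i`, proposition `3*i+2` (written `O_i`) marks Odd's
positions of priority `i`, and proposition `0` (written `M`) marks the positions in `M`. -/
def gameTree (G : ParityGame) (M : G.V → Prop) : KripkeTree where
  S := G.V
  E := G.E
  root := G.init
  label := fun v l =>
    (l = 0 ∧ M v) ∨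
    (G.evenOwns v ∧ l = 3 * G.prio v + 1) ∨
    (¬ G.evenOwns v ∧ l = 3 * G.prio v + 2)

/-- Encoding of an arena with marked positions as a tree with plain ownership labels:
`0` is `M`, `1` is `E`, `2` is `O`. -/
def arenaTreeEOM (G : ParityGame) (M : G.V → Prop) : KripkeTree where
  S := G.V
  E := G.E
  root := G.init
  label := fun v l => (l = 0 ∧ M v) ∨ (l = 1 ∧ G.evenOwns v) ∨ (l = 2 ∧ ¬ G.evenOwns v)

/-! ## The formulas `Parity_I` -/

def parityBody (m q : ℕ) : MuFormula :=
  ((List.range (q+1)).filter (fun i => m ≤ i)).foldr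
    (fun i acc => .or (.or (.and (.prop (3*i+1)) (.dia (.var i)))
                           (.and (.prop (3*i+2)) (.box (.var i)))) acc) .bot

def bindChain (m : ℕ) (body : MuFormula) : ℕ → MuFormula
  | 0 => body
  | k+1 => (if (m + k) % 2 = 1 then MuFormula.mu else MuFormula.nu) (m + k) (bindChain m body k)

/-- `Parity_{m..q} = γ_q X_q. … γ_m X_m. ⋁_{i} (E_i ∧ ◇X_i) ∨ (O_i ∧ □X_i)`. -/
def ParityF (m q : ℕ) : MuFormula := bindChain m (parityBody m q) (q - m + 1)

/-! ## Bounded parity games -/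

/-- The modal formulas `Bounded_{a,b}` (with reset parameter `p`), over
propositions `M = 0`, `E = 1`, `O = 2`. -/
def BoundedF (p : ℕ) : ℕ → ℕ → MuFormula
  | 0, _ => .bot
  | a+1, 0 =>
      .or (.or (.and (.prop 1) (.and (.nprop 0) (.dia (BoundedF p a 0))))
               (.and (.prop 1) (.and (.prop 0) .bot)))
          (.or (.and (.prop 2) (.and (.nprop 0) (.box (BoundedF p a 0))))
               (.and (.prop 2) (.and (.prop 0) .top)))
  | a+1, b+1 =>
      .or (.or (.and (.prop 1) (.and (.nprop 0) (.dia (BoundedF p a (b+1)))))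
               (.and (.prop 1) (.and (.prop 0) (.dia (BoundedF p p b)))))
          (.or (.and (.prop 2) (.and (.nprop 0) (.box (BoundedF p a (b+1)))))
               (.and (.prop 2) (.and (.prop 0) (.box (BoundedF p p b)))))
  termination_by a b => (b, a)

/-- The `n`-bounded parity game on `G` with marked positions `M`: the counter is
decremented at each marked position, and reaching a marked position at counter `0`
(recorded by the Boolean flag) is an immediate loss for its owner (the position is
terminal). -/
noncomputable def boundedGame (G : ParityGame) (M : G.V → Prop) (n : ℕ) : ParityGame where
  V := G.V × ℕ × Bool
  evenOwns := fun x => G.evenOwns x.1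
  E := fun x y =>
    x.2.2 = false ∧ G.E x.1 y.1 ∧
    ((¬ M y.1 ∧ y.2.1 = x.2.1 ∧ y.2.2 = false) ∨
     (M y.1 ∧ 0 < x.2.1 ∧ y.2.1 = x.2.1 - 1 ∧ y.2.2 = false) ∨
     (M y.1 ∧ x.2.1 = 0 ∧ y.2.1 = 0 ∧ y.2.2 = true))
  init := (G.init, (if M G.init then n - 1 else n), if M G.init ∧ n = 0 then true else false)
  prio := fun x => G.prio x.1

/-! ## Challenge games -/

/-- A challenge configuration: for each (even) priority a flag
(`true` = open, `false` = met) and a counter. -/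
def ChallengeCfg : Type := ℕ → Bool × ℕ

/-- Odd opens challenges in decreasing order: a challenge can be opened only when its
counter is positive (the counter is decremented) and all higher even challenges are open. -/
def OpenStep (q : ℕ) (c c' : ChallengeCfg) : Prop :=
  ∀ i, c' i = c i ∨
    (i ≤ q ∧ i % 2 = 0 ∧ (c i).1 = false ∧ 0 < (c i).2 ∧
     c' i = (true, (c i).2 - 1) ∧
     ∀ j, i < j → j ≤ q → j % 2 = 0 → (c' j).1 = true)

/-- When priority `p` is seen while the `p`-challenge is open, it is met and
all lower challenges are reset (counters back to `n`, marked met). -/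
noncomputable def updCfg (n p : ℕ) (c : ChallengeCfg) : ChallengeCfg := fun i =>
  if (c p).1 = true then
    (if i = p then (false, (c i).2) else if i < p then (false, n) else c i)
  else c i

/-- The arena of the `n`-challenge game on `G` (priorities at most `q`): positions carry
the parity-game position, the challenge configuration, and a phase bit
(`false`: Odd may open challenges; `true`: the owner of the position moves). -/
noncomputable def challengeGame (G : ParityGame) (q n : ℕ) : ParityGame where
  V := G.V × ChallengeCfg × Bool
  evenOwns := fun x => x.2.2 = true ∧ G.evenOwns x.1
  E := fun x y =>
    (x.2.2 = false ∧ y.2.2 = true ∧ y.1 = x.1 ∧ OpenStep q x.2.1 y.2.1) ∨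
    (x.2.2 = true ∧ y.2.2 = false ∧ G.E x.1 y.1 ∧ y.2.1 = updCfg n (G.prio y.1) x.2.1)
  init := (G.init, fun _ => (false, n), false)
  prio := fun x => G.prio x.1

/-- Even wins a play of the challenge game: either Odd gets stuck, or the play is infinite
with dominant priority `d` and either `d` is even or every opened `(d+1)`-challenge is
eventually met or reset. -/
def EvenWinsChallengePlay (G : ParityGame) (q n : ℕ)
    (p : ℕ → Option (challengeGame G q n).V) : Prop :=
  (∃ k v, p k = some v ∧ (challengeGame G q n).Terminal v ∧
    ¬ (challengeGame G q n).evenOwns v) ∨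
  ((challengeGame G q n).Infinite p ∧ ∃ d, (challengeGame G q n).Dominant p d ∧
    (d % 2 = 0 ∨ ∀ N, ∃ k ≥ N, ∃ v, p k = some v ∧ (v.2.1 (d+1)).1 = false))

/-- Even has a winning strategy in the `n`-challenge game on `G`. -/
def EvenWinsChallenge (G : ParityGame) (q n : ℕ) : Prop :=
  ∃ σ : (challengeGame G q n).V → (challengeGame G q n).V,
    (challengeGame G q n).ValidFor (challengeGame G q n).evenOwns σ ∧
    ∀ p, (challengeGame G q n).IsPlayFrom (challengeGame G q n).init p →
      (challengeGame G q n).Agrees (challengeGame G q n).evenOwns σ p →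
      EvenWinsChallengePlay G q n p

/-! ## Generalised challenge configurations -/

/-- A generalised challenge configuration: for each target level `i` and input priority `j`,
a flag (`true` = open, `false` = met) and a counter. -/
def Cfg2 : Type := ℕ → ℕ → Bool × ℕ

/-- Validity: whenever `a_{i,j}` is open, `a_{i,k}` is open for all odd `k ≥ j` in the
input index (bounded by `qJ`). -/
def Valid2 (qJ : ℕ) (c : Cfg2) : Prop :=
  ∀ i j k, j % 2 = 1 → k % 2 = 1 → j ≤ k → k ≤ qJ → (c i j).1 = true → (c i k).1 = true

/-- Update after the play visits priority `p`: `a_{i,j} := met` for all `j ≤ p` and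
`c_{i,j} := n` for all `j < p`. -/
noncomputable def gUpdate (n p : ℕ) (c : Cfg2) : Cfg2 := fun i j =>
  if j ≤ p then (false, if j < p then n else (c i j).2) else c i j

/-- Even opens, at some level `i`, all (not yet open) challenges on priorities `≥ pr`,
decrementing their counters; only possible when those counters are positive. -/
def GOpen (qJ : ℕ) (c c' : Cfg2) : Prop :=
  ∃ i pr,
    (∀ j, pr ≤ j → j ≤ qJ → j % 2 = 1 → (c i j).1 = false →
        0 < (c i j).2 ∧ c' i j = (true, (c i j).2 - 1)) ∧
    (∀ j, pr ≤ j → j ≤ qJ → j % 2 = 1 → (c i j).1 = true → c' i j = c i j) ∧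
    (∀ j, (j < pr ∨ qJ < j ∨ j % 2 = 0) → c' i j = c i j) ∧
    (∀ i' j, i' ≠ i → c' i' j = c i' j)

/-- A `k`-reset: `a_{i,j} := met` and `c_{i,j} := n` for all `i ≤ k` and all `j`. -/
def GReset (n : ℕ) (c c' : Cfg2) : Prop :=
  ∃ k, (∀ i j, i ≤ k → c' i j = (false, n)) ∧ (∀ i j, ¬ i ≤ k → c' i j = c i j)

/-- One step of challenge bookkeeping along a play of the generalised challenge game. -/
def GStep (qJ n : ℕ) (c c' : Cfg2) : Prop :=
  GOpen qJ c c' ∨ GReset n c c' ∨ ∃ p, c' = gUpdate n p c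



namespace PDet
open ParityGame

variable {G : ParityGame}

/-! ### Players and winning -/

def ow (G : ParityGame) : Bool → G.V → Prop
  | true => G.evenOwns
  | false => fun v => ¬ G.evenOwns v

def WinsPlay (G : ParityGame) : Bool → (ℕ → Option G.V) → Prop
  | true => G.EvenWinsPlay
  | false => G.OddWinsPlay

lemma winsPlay_iff (b : Bool) (p : ℕ → Option G.V) :
    WinsPlay G b p ↔
      ((∃ n v, p n = some v ∧ G.Terminal v ∧ ow G (!b) v) ∨
       (G.Infinite p ∧ ∃ d, G.Dominant p d ∧ d % 2 = cond b 0 1)) := by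
  cases b <;> simp [WinsPlay, ParityGame.EvenWinsPlay, ParityGame.OddWinsPlay, ow]

lemma ow_not {b : Bool} {v : G.V} : ow G (!b) v ↔ ¬ ow G b v := by
  cases b <;> simp [ow]

lemma ow_total {b : Bool} {v : G.V} (h : ¬ ow G b v) : ow G (!b) v := ow_not.2 h

/-! ### Basic play lemmas -/

lemma isPlay_none_mono {v₀ : G.V} {p} (hp : G.IsPlayFrom v₀ p) {n m : ℕ}
    (h : p n = none) (hnm : n ≤ m) : p m = none := by
  induction m, hnm using Nat.le_induction with
  | base => exact h
  | succ m hm ih => exact hp.2.1 m ih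

lemma isPlay_some_of_le {v₀ : G.V} {p} (hp : G.IsPlayFrom v₀ p) {n m : ℕ} {v}
    (h : p m = some v) (hnm : n ≤ m) : ∃ w, p n = some w := by
  cases hw : p n with
  | none => rw [isPlay_none_mono hp hw hnm] at h; exact absurd h (by simp)
  | some w => exact ⟨w, rfl⟩

lemma isPlay_shift {v₀ : G.V} {p} (hp : G.IsPlayFrom v₀ p) {n : ℕ} {w}
    (h : p n = some w) : G.IsPlayFrom w (fun k => p (n + k)) := by
  refine ⟨h, fun k hk => ?_, fun k v hv => ?_⟩
  · exact hp.2.1 (n + k) hk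
  · have := hp.2.2 (n + k) v hv
    exact ⟨fun ht => this.1 ht, fun ht => this.2 ht⟩

lemma agrees_shift {own : G.V → Prop} {σ : G.V → G.V} {p} (hag : G.Agrees own σ p) (n : ℕ) :
    G.Agrees own σ (fun k => p (n + k)) := by
  intro k v hv ho ht
  exact hag (n + k) v hv ho ht

lemma occursInf_shift {p : ℕ → Option G.V} {d : ℕ} (n : ℕ) :
    G.OccursInfinitely (fun k => p (n + k)) d ↔ G.OccursInfinitely p d := by
  constructor
  · intro h N
    obtain ⟨k, hk, v, hv, hd⟩ := h N
    exact ⟨n + k, le_trans hk (Nat.le_add_left _ _), v, hv, hd⟩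
  · intro h N
    obtain ⟨m, hm, v, hv, hd⟩ := h (N + n)
    refine ⟨m - n, ?_, v, ?_, hd⟩
    · omega
    · show p (n + (m - n)) = some v
      rw [show n + (m - n) = m from by omega]; exact hv

lemma infinite_shift {v₀ : G.V} {p} (hp : G.IsPlayFrom v₀ p) {n : ℕ}
    (h : G.Infinite (fun k => p (n + k))) : G.Infinite p := by
  intro m hm
  rcases le_or_gt n m with hle | hlt
  · exact h (m - n) (show p (n + (m - n)) = none from by
      rw [show n + (m - n) = m from by omega]; exact hm)
  · exact h 0 (by simpa using isPlay_none_mono hp hm (le_of_lt hlt))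

lemma winsPlay_shift {v₀ : G.V} {p} (hp : G.IsPlayFrom v₀ p) {b : Bool} {n : ℕ}
    (h : WinsPlay G b (fun k => p (n + k))) : WinsPlay G b p := by
  rw [winsPlay_iff] at h ⊢
  rcases h with ⟨k, v, hv, ht, ho⟩ | ⟨hinf, d, ⟨h1, h2⟩, hpar⟩
  · exact Or.inl ⟨n + k, v, hv, ht, ho⟩
  · exact Or.inr ⟨infinite_shift hp hinf, d,
      ⟨(occursInf_shift n).1 h1, fun d' hd' => h2 d' ((occursInf_shift n).2 hd')⟩, hpar⟩

end PDet
namespace PDet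
open ParityGame

variable {G : ParityGame}

/-! ### Cons and trivial plays -/

def consp (v : G.V) (q : ℕ → Option G.V) : ℕ → Option G.V :=
  fun n => match n with | 0 => some v | k+1 => q k

lemma occursInf_consp {v : G.V} {q} {d : ℕ} (h : G.OccursInfinitely (consp v q) d) :
    G.OccursInfinitely q d := by
  intro N
  obtain ⟨n, hn, u, hu, hd⟩ := h (N + 1)
  match n, hn with
  | (k+1), hn => exact ⟨k, by omega, u, hu, hd⟩

lemma occursInf_consp' {v : G.V} {q} {d : ℕ} (h : G.OccursInfinitely q d) :
    G.OccursInfinitely (consp v q) d := by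
  intro N
  obtain ⟨n, hn, u, hu, hd⟩ := h N
  exact ⟨n + 1, by omega, u, hu, hd⟩

lemma consp_isPlay {v w : G.V} {q} (hE : G.E v w) (hq0 : q 0 = some w)
    (hq : G.IsPlayFrom w q) : G.IsPlayFrom v (consp v q) := by
  refine ⟨rfl, fun n hn => ?_, fun n u hu => ?_⟩
  · match n with
    | 0 => exact absurd hn (by simp [consp])
    | k+1 => exact hq.2.1 k hn
  · match n with
    | 0 =>
      obtain rfl : v = u := by simpa [consp] using hu
      refine ⟨fun ht => absurd hE (ht w), fun _ => ⟨w, hE, hq0⟩⟩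
    | k+1 => exact hq.2.2 k u hu

lemma winsPlay_consp_tail {b : Bool} {v : G.V} {q} (hnt : ¬ G.Terminal v)
    (h : WinsPlay G b (consp v q)) : WinsPlay G b q := by
  rw [winsPlay_iff] at h ⊢
  rcases h with ⟨n, u, hu, ht, ho⟩ | ⟨hinf, d, ⟨h1, h2⟩, hpar⟩
  · match n with
    | 0 =>
      obtain rfl : v = u := by simpa [consp] using hu
      exact absurd ht hnt
    | k+1 => exact Or.inl ⟨k, u, hu, ht, ho⟩
  · refine Or.inr ⟨fun n => hinf (n+1), d, ⟨occursInf_consp h1,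
      fun d' hd' => h2 d' (occursInf_consp' hd')⟩, hpar⟩

def termPlay (v : G.V) : ℕ → Option G.V :=
  fun n => match n with | 0 => some v | _+1 => none

lemma termPlay_isPlay {v : G.V} (ht : G.Terminal v) : G.IsPlayFrom v (termPlay v) := by
  refine ⟨rfl, fun n _ => ?_, fun n u hu => ?_⟩
  · match n with
    | 0 => rfl
    | k+1 => rfl
  · match n with
    | 0 =>
      obtain rfl : v = u := by simpa [termPlay] using hu
      exact ⟨fun _ => rfl, fun hnt => absurd ht hnt⟩
    | k+1 => exact absurd hu (by simp [termPlay])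

/-! ### Positional winning -/

def WinsVia (G : ParityGame) (b : Bool) (σ : G.V → G.V) (v : G.V) : Prop :=
  ∀ p, G.IsPlayFrom v p → G.Agrees (ow G b) σ p → WinsPlay G b p

def WinRegion (G : ParityGame) (b : Bool) : Set G.V :=
  {v | ∃ σ, G.ValidFor (ow G b) σ ∧ WinsVia G b σ v}

lemma winsVia_succ {b : Bool} {σ : G.V → G.V} {v w : G.V}
    (hval : G.ValidFor (ow G b) σ) (hwin : WinsVia G b σ v) (hE : G.E v w)
    (hw : ow G b v → w = σ v) : WinsVia G b σ w := by
  intro q hq hag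
  have hnt : ¬ G.Terminal v := fun ht => ht w hE
  have hplay : G.IsPlayFrom v (consp v q) := consp_isPlay hE hq.1 hq
  have hagrees : G.Agrees (ow G b) σ (consp v q) := by
    intro n u hu ho hu'
    match n with
    | 0 =>
      obtain rfl : v = u := by simpa [consp] using hu
      show q 0 = some (σ v)
      rw [hq.1, hw ho]
    | k+1 => exact hag k u hu ho hu'
  exact winsPlay_consp_tail hnt (hwin _ hplay hagrees)

lemma winsVia_terminal {b : Bool} {σ : G.V → G.V} {v : G.V}
    (hwin : WinsVia G b σ v) (ht : G.Terminal v) : ow G (!b) v := by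
  have h := hwin (termPlay v) (termPlay_isPlay ht)
    (fun n u hu ho hnt => by
      match n with
      | 0 =>
        obtain rfl : v = u := by simpa [termPlay] using hu
        exact absurd ht hnt
      | k+1 => exact absurd hu (by simp [termPlay]))
  rw [winsPlay_iff] at h
  rcases h with ⟨n, u, hu, _, ho⟩ | ⟨hinf, _⟩
  · match n, hu with
    | 0, hu =>
      obtain rfl : v = u := by simpa [termPlay] using hu
      exact ho
    | k+1, hu => exact absurd hu (by simp [termPlay])
  · exact absurd (rfl : termPlay v 1 = none) (hinf 1)

/-! ### Choice helpers -/

noncomputable def pick {α : Type} (a : α) (P : α → Prop) : α := @Classical.epsilon _ ⟨a⟩ P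

lemma pick_spec {α : Type} (a : α) {P : α → Prop} (h : ∃ x, P x) : P (pick a P) :=
  Classical.epsilon_spec h

lemma exists_succ_of_not_terminal {v : G.V} (h : ¬ G.Terminal v) : ∃ w, G.E v w := by
  unfold ParityGame.Terminal at h; push_neg at h; exact h

noncomputable def eps (G : ParityGame) : G.V → G.V := fun v => pick v (G.E v)

lemma eps_valid (G : ParityGame) (own : G.V → Prop) : G.ValidFor own (eps G) :=
  fun v _ hnt => pick_spec v (exists_succ_of_not_terminal hnt)

end PDet
namespace PDet
open ParityGame

variable {G : ParityGame}

theorem uniform_winning (G : ParityGame) (b : Bool) :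
    ∃ σ, G.ValidFor (ow G b) σ ∧ ∀ v ∈ WinRegion G b, WinsVia G b σ v := by
  classical
  let r : G.V → G.V → Prop := WellOrderingRel
  have wf : WellFounded r := (IsWellFounded.wf : WellFounded (WellOrderingRel (α := G.V)))
  -- a chosen witness strategy for each vertex of the winning region
  let st : G.V → (G.V → G.V) := fun v =>
    if h : v ∈ WinRegion G b then Classical.choose h else eps G
  have st_spec : ∀ v (h : v ∈ WinRegion G b),
      G.ValidFor (ow G b) (st v) ∧ WinsVia G b (st v) v := by
    intro v h
    have e : st v = Classical.choose h := dif_pos h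
    rw [e]
    exact Classical.choose_spec h
  let S : G.V → Set G.V := fun u =>
    {v | G.ValidFor (ow G b) (st v) ∧ WinsVia G b (st v) u}
  have hSu : ∀ u, u ∈ WinRegion G b → u ∈ S u := by
    intro u hu; exact st_spec u hu
  let rk : G.V → G.V := fun u => if h : (S u).Nonempty then wf.min (S u) h else u
  have rk_mem : ∀ u (h : (S u).Nonempty), rk u ∈ S u := by
    intro u h; show (if h : (S u).Nonempty then _ else _) ∈ S u; rw [dif_pos h]
    exact wf.min_mem _ h
  have rk_min : ∀ u x, x ∈ S u → ¬ r x (rk u) := by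
    intro u x hx
    show ¬ r x (if h : (S u).Nonempty then _ else _)
    rw [dif_pos ⟨x, hx⟩]
    exact wf.not_lt_min _ hx
  let σW : G.V → G.V := fun u => if (S u).Nonempty then st (rk u) u else eps G u
  have σW_eq : ∀ u, (S u).Nonempty → σW u = st (rk u) u := by
    intro u h; show (if (S u).Nonempty then _ else _) = _; rw [if_pos h]
  refine ⟨σW, ?_, ?_⟩
  · intro v hv hnt
    by_cases h : (S v).Nonempty
    · rw [σW_eq v h]; exact (rk_mem v h).1 v hv hnt
    · show G.E v (if (S v).Nonempty then _ else _)
      rw [if_neg h]; exact eps_valid G _ v hv hnt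
  intro u hu p hp hag
  -- the one-step lemma
  have step : ∀ x y, (S x).Nonempty → G.E x y → (ow G b x → y = σW x) →
      rk x ∈ S y ∧ ((S y).Nonempty ∧ (rk y = rk x ∨ r (rk y) (rk x))) := by
    intro x y hx hE hw
    have hmem := rk_mem x hx
    have hwy : WinsVia G b (st (rk x)) y := by
      refine winsVia_succ hmem.1 hmem.2 hE ?_
      intro ho; rw [hw ho, σW_eq x hx]
    have hSy : rk x ∈ S y := ⟨hmem.1, hwy⟩
    refine ⟨hSy, ⟨rk x, hSy⟩, ?_⟩
    rcases trichotomous_of r (rk y) (rk x) with h | h | h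
    · exact Or.inr h
    · exact Or.inl h
    · exact absurd h (rk_min y _ hSy)
  -- play invariant
  have inv : ∀ n x, p n = some x → (S x).Nonempty := by
    intro n
    induction n with
    | zero =>
      intro x hx
      rw [hp.1] at hx
      obtain rfl : u = x := by simpa using hx
      exact ⟨u, hSu u hu⟩
    | succ n ih =>
      intro y hy
      obtain ⟨x, hx⟩ := isPlay_some_of_le hp hy (Nat.le_succ n)
      have hnt : ¬ G.Terminal x := by
        intro ht
        rw [(hp.2.2 n x hx).1 ht] at hy; exact absurd hy (by simp)
      obtain ⟨w, hEw, hw⟩ := (hp.2.2 n x hx).2 hnt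
      obtain rfl : w = y := by rw [hw] at hy; exact Option.some.inj hy
      have hwchoice : ow G b x → w = σW x := by
        intro ho
        have := hag n x hx ho hnt
        rw [this] at hw; exact (Option.some.inj hw).symm
      exact (step x w (ih x hx) hEw hwchoice).2.1
  have step' : ∀ n x y, p n = some x → p (n+1) = some y →
      rk x ∈ S y ∧ (rk y = rk x ∨ r (rk y) (rk x)) := by
    intro n x y hx hy
    have hnt : ¬ G.Terminal x := by
      intro ht; rw [(hp.2.2 n x hx).1 ht] at hy; exact absurd hy (by simp)
    obtain ⟨w, hEw, hw⟩ := (hp.2.2 n x hx).2 hnt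
    obtain rfl : w = y := by rw [hw] at hy; exact Option.some.inj hy
    have hwchoice : ow G b x → w = σW x := by
      intro ho
      have := hag n x hx ho hnt
      rw [this] at hw; exact (Option.some.inj hw).symm
    have := step x w (inv n x hx) hEw hwchoice
    exact ⟨this.1, this.2.2⟩
  by_cases hinf : G.Infinite p
  · -- infinite play: ranks eventually constant
    have hv : ∀ n, ∃ x, p n = some x := by
      intro n
      cases h : p n with
      | none => exact absurd h (hinf n)
      | some x => exact ⟨x, rfl⟩
    let val : ℕ → G.V := fun n => (hv n).choose
    have hval : ∀ n, p n = some (val n) := fun n => (hv n).choose_spec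
    let R : Set G.V := Set.range (fun n => rk (val n))
    have hRne : R.Nonempty := ⟨rk (val 0), 0, rfl⟩
    obtain ⟨n₀, hn₀⟩ : ∃ n₀, rk (val n₀) = wf.min R hRne := wf.min_mem R hRne
    have const : ∀ n, n₀ ≤ n → rk (val n) = rk (val n₀) := by
      intro n hn
      induction n, hn using Nat.le_induction with
      | base => rfl
      | succ n hn ih =>
        rcases (step' n (val n) (val (n+1)) (hval n) (hval (n+1))).2 with h | h
        · rw [h, ih]
        · rw [ih] at h
          exact absurd (by rw [hn₀] at h; exact h)
            (wf.not_lt_min R ⟨n + 1, rfl⟩)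
    -- the tail is consistent with a single witness strategy
    have hS0 : (S (val n₀)).Nonempty := inv n₀ _ (hval n₀)
    have hmem := rk_mem (val n₀) hS0
    have htail : WinsPlay G b (fun k => p (n₀ + k)) := by
      refine hmem.2 _ (isPlay_shift hp (hval n₀)) ?_
      intro k x hx ho hnt
      have hx' : p (n₀ + k) = some x := hx
      obtain rfl : val (n₀ + k) = x := by
        have := hval (n₀ + k); rw [this] at hx'; exact Option.some.inj hx'
      have := hag (n₀ + k) _ hx' ho hnt
      show p (n₀ + k + 1) = some (st (rk (val n₀)) (val (n₀ + k)))
      rw [this, σW_eq _ (inv _ _ hx'), const (n₀ + k) (Nat.le_add_right _ _)]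
    exact winsPlay_shift hp htail
  · -- finite play: ends in a terminal vertex of the opponent
    have hex : ∃ n, p n = none := by
      unfold ParityGame.Infinite at hinf; push_neg at hinf; exact hinf
    let n₁ := Nat.find hex
    have hn₁ : p n₁ = none := Nat.find_spec hex
    have hpos : 0 < n₁ := by
      rcases Nat.eq_zero_or_pos n₁ with h | h
      · rw [h, hp.1] at hn₁; exact absurd hn₁ (by simp)
      · exact h
    have hprev : p (n₁ - 1) ≠ none := Nat.find_min hex (by omega)
    obtain ⟨x, hx⟩ : ∃ x, p (n₁ - 1) = some x := by
      cases h : p (n₁ - 1) with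
      | none => exact absurd h hprev
      | some x => exact ⟨x, rfl⟩
    have ht : G.Terminal x := by
      by_contra hnt
      obtain ⟨w, _, hw⟩ := (hp.2.2 (n₁ - 1) x hx).2 hnt
      rw [show n₁ - 1 + 1 = n₁ from by omega] at hw
      rw [hw] at hn₁; exact absurd hn₁ (by simp)
    have hSx := inv (n₁ - 1) x hx
    have ho : ow G (!b) x := winsVia_terminal (rk_mem x hSx).2 ht
    exact (winsPlay_iff b p).2 (Or.inl ⟨n₁ - 1, x, hx, ht, ho⟩)

end PDet
namespace PDet
open ParityGame

variable {G : ParityGame}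

/-- If `σ'` agrees with the uniform winning strategy `τ` on the winning region,
then `σ'` also wins from every vertex of the winning region. -/
lemma uniform_invariance {b : Bool} {τ : G.V → G.V}
    (hval : G.ValidFor (ow G b) τ) (hwin : ∀ v ∈ WinRegion G b, WinsVia G b τ v)
    {σ' : G.V → G.V} (hagree : ∀ x ∈ WinRegion G b, ow G b x → σ' x = τ x) :
    ∀ w ∈ WinRegion G b, WinsVia G b σ' w := by
  intro w hw p hp hag
  have inv : ∀ n x, p n = some x → x ∈ WinRegion G b ∧ WinsVia G b τ x := by
    intro n
    induction n with
    | zero =>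
      intro x hx
      rw [hp.1] at hx
      obtain rfl : w = x := by simpa using hx
      exact ⟨hw, hwin w hw⟩
    | succ n ih =>
      intro y hy
      obtain ⟨x, hx⟩ := isPlay_some_of_le hp hy (Nat.le_succ n)
      have hnt : ¬ G.Terminal x := by
        intro ht; rw [(hp.2.2 n x hx).1 ht] at hy; exact absurd hy (by simp)
      obtain ⟨u, hEu, hu⟩ := (hp.2.2 n x hx).2 hnt
      obtain rfl : u = y := by rw [hu] at hy; exact Option.some.inj hy
      have hwy : WinsVia G b τ u := by
        refine winsVia_succ hval (ih x hx).2 hEu ?_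
        intro ho
        have := hag n x hx ho hnt
        rw [hagree x (ih x hx).1 ho] at this
        rw [this] at hu; exact (Option.some.inj hu).symm
      exact ⟨⟨τ, hval, hwy⟩, hwy⟩
  have hagτ : G.Agrees (ow G b) τ p := by
    intro n x hx ho hnt
    rw [hag n x hx ho hnt, hagree x (inv n x hx).1 ho]
  exact hwin w hw p hp hagτ

section Closure

variable {c : Bool} {τ : G.V → G.V}
  (hval : G.ValidFor (ow G c) τ) (hwin : ∀ v ∈ WinRegion G c, WinsVia G c τ v)

include hval hwin

/-- Vertices of player `c` outside `c`'s winning region have no edge into it. -/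
lemma closure_own {u w : G.V} (hu : u ∉ WinRegion G c) (ho : ow G c u)
    (hE : G.E u w) : w ∉ WinRegion G c := by
  intro hwW
  apply hu
  classical
  let σ' := Function.update τ u w
  have hval' : G.ValidFor (ow G c) σ' := by
    intro x hx hnt
    by_cases hxu : x = u
    · subst hxu; rw [show σ' x = w from Function.update_self _ _ _]; exact hE
    · rw [show σ' x = τ x from Function.update_of_ne hxu _ _]; exact hval x hx hnt
  have hagree : ∀ x ∈ WinRegion G c, ow G c x → σ' x = τ x := by
    intro x hx _
    have : x ≠ u := fun h => hu (h ▸ hx)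
    exact Function.update_of_ne this _ _
  have hw' : WinsVia G c σ' w := uniform_invariance hval hwin hagree w hwW
  refine ⟨σ', hval', ?_⟩
  intro p hp hag
  have hnt : ¬ G.Terminal u := fun ht => ht w hE
  have h1 : p 1 = some w := by
    have := hag 0 u hp.1 ho hnt
    rw [this, show σ' u = w from Function.update_self _ _ _]
  have htail : WinsPlay G c (fun k => p (1 + k)) :=
    hw' _ (isPlay_shift hp h1) (agrees_shift hag 1)
  exact winsPlay_shift hp htail

/-- Opponent vertices outside `c`'s winning region keep a successor outside it. -/
lemma closure_opp {u : G.V} (hu : u ∉ WinRegion G c) (ho : ow G (!c) u)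
    (hnt : ¬ G.Terminal u) : ∃ w, G.E u w ∧ w ∉ WinRegion G c := by
  by_contra h
  push_neg at h
  apply hu
  refine ⟨τ, hval, ?_⟩
  intro p hp hag
  obtain ⟨w, hEw, hw⟩ := (hp.2.2 0 u hp.1).2 hnt
  have hwW : w ∈ WinRegion G c := h w hEw
  have htail : WinsPlay G c (fun k => p (1 + k)) :=
    hwin w hwW _ (isPlay_shift hp hw) (agrees_shift hag 1)
  exact winsPlay_shift hp htail

/-- Terminal vertices of the opponent belong to `c`'s winning region. -/
lemma closure_term {u : G.V} (ho : ow G (!c) u) (ht : G.Terminal u) :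
    u ∈ WinRegion G c := by
  refine ⟨τ, hval, ?_⟩
  intro p hp hag
  exact (winsPlay_iff c p).2 (Or.inl ⟨0, u, hp.1, ht, ho⟩)

end Closure

end PDet
namespace PDet
open ParityGame

variable {G : ParityGame}

/-! ### Restricted games -/

noncomputable def restrictG (G : ParityGame) (U : Set G.V) (h : U.Nonempty) : ParityGame where
  V := {v // v ∈ U}
  evenOwns := fun v => G.evenOwns v.1
  E := fun v w => G.E v.1 w.1
  init := ⟨h.choose, h.choose_spec⟩
  prio := fun v => G.prio v.1

lemma restrict_ow {U : Set G.V} {h : U.Nonempty} (b : Bool) (x : (restrictG G U h).V) :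
    ow (restrictG G U h) b x ↔ ow G b x.1 := by
  cases b <;> exact Iff.rfl

/-- Transfer of a winning play that stays inside `U` from the restricted game to `G`. -/
lemma restrict_winsPlay {U : Set G.V} {hne : U.Nonempty} {b : Bool}
    {σ' : (restrictG G U hne).V → (restrictG G U hne).V}
    (hterm : ∀ x : (restrictG G U hne).V, (restrictG G U hne).Terminal x ↔ G.Terminal x.1)
    {p : ℕ → Option G.V} {v : G.V} (hv : v ∈ U)
    (hp : G.IsPlayFrom v p) (hin : ∀ n x, p n = some x → x ∈ U)
    (hag : ∀ n x (hx : x ∈ U), p n = some x → ow G b x → ¬ G.Terminal x →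
      p (n+1) = some (σ' ⟨x, hx⟩).1)
    (hwin : WinsVia (restrictG G U hne) b σ' ⟨v, hv⟩) : WinsPlay G b p := by
  classical
  let q : ℕ → Option (restrictG G U hne).V := fun n =>
    (p n).bind (fun x => if hx : x ∈ U then some ⟨x, hx⟩ else none)
  have hq_some : ∀ n x (hx : p n = some x), q n = some ⟨x, hin n x hx⟩ := by
    intro n x hx
    show (p n).bind _ = _
    rw [hx]
    simp [Option.bind, dif_pos (hin n x hx)]
  have hq_none : ∀ n, p n = none → q n = none := by
    intro n hx; show (p n).bind _ = _; rw [hx]; rfl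
  have hq_inv : ∀ n y, q n = some y → p n = some y.1 := by
    intro n y hy
    cases hx : p n with
    | none => rw [hq_none n hx] at hy; exact absurd hy (by simp)
    | some x =>
      rw [hq_some n x hx] at hy
      cases Option.some.inj hy
      exact rfl
  have hq_none_iff : ∀ n, q n = none ↔ p n = none := by
    intro n
    constructor
    · intro h
      cases hx : p n with
      | none => rfl
      | some x => rw [hq_some n x hx] at h; exact absurd h (by simp)
    · exact hq_none n
  have hqplay : (restrictG G U hne).IsPlayFrom ⟨v, hv⟩ q := by
    refine ⟨?_, ?_, ?_⟩
    · have := hq_some 0 v hp.1; rw [this]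
    · intro n hn
      exact hq_none _ (hp.2.1 n ((hq_none_iff n).1 hn))
    · intro n y hy
      have hpy := hq_inv n y hy
      constructor
      · intro ht
        exact hq_none _ ((hp.2.2 n y.1 hpy).1 ((hterm y).1 ht))
      · intro ht
        have hgt : ¬ G.Terminal y.1 := fun h => ht ((hterm y).2 h)
        obtain ⟨w, hEw, hw⟩ := (hp.2.2 n y.1 hpy).2 hgt
        exact ⟨⟨w, hin _ w hw⟩, hEw, hq_some _ w hw⟩
  have hqag : (restrictG G U hne).Agrees (ow (restrictG G U hne) b) σ' q := by
    intro n y hy ho ht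
    have hpy := hq_inv n y hy
    have hoy : ow G b y.1 := (restrict_ow b y).1 ho
    have hgt : ¬ G.Terminal y.1 := fun h => ht ((hterm y).2 h)
    have := hag n y.1 y.2 hpy hoy hgt
    have e := hq_some (n+1) _ this
    rw [e]
    exact congrArg some (Subtype.ext rfl)
  have hqwin : WinsPlay (restrictG G U hne) b q := hwin q hqplay hqag
  rw [winsPlay_iff] at hqwin ⊢
  rcases hqwin with ⟨n, y, hy, ht, ho⟩ | ⟨hinf, d, ⟨h1, h2⟩, hpar⟩
  · exact Or.inl ⟨n, y.1, hq_inv n y hy, (hterm y).1 ht, (restrict_ow _ y).1 ho⟩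
  · refine Or.inr ⟨?_, d, ⟨?_, ?_⟩, hpar⟩
    · intro n hn; exact hinf n (hq_none n hn)
    · intro N
      obtain ⟨n, hn, y, hy, hd⟩ := h1 N
      exact ⟨n, hn, y.1, hq_inv n y hy, hd⟩
    · intro d' hd'
      refine h2 d' ?_
      intro N
      obtain ⟨n, hn, x, hx, hd⟩ := hd' N
      exact ⟨n, hn, ⟨x, hin n x hx⟩, hq_some n x hx, hd⟩

end PDet
namespace PDet
open ParityGame

/-! ### Attractors -/

def stage (G : ParityGame) (b : Bool) (U A : Set G.V) : Ordinal.{0} → Set G.V := fun o =>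
  {v | v ∈ U ∧ (v ∈ A ∨
    (ow G b v ∧ ∃ w, G.E v w ∧ ∃ o' : {x : Ordinal.{0} // x < o}, w ∈ stage G b U A o'.1) ∨
    (ow G (!b) v ∧ ∀ w, G.E v w → w ∈ U → ∃ o' : {x : Ordinal.{0} // x < o}, w ∈ stage G b U A o'.1))}
termination_by o => o
decreasing_by exacts [o'.2, o'.2]

def attr (G : ParityGame) (b : Bool) (U A : Set G.V) : Set G.V :=
  {v | ∃ o, v ∈ stage G b U A o}

variable {G : ParityGame} {b : Bool} {U A : Set G.V}

lemma stage_sub_U {o : Ordinal} : stage G b U A o ⊆ U := by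
  intro v hv; rw [stage] at hv; exact hv.1

lemma attr_sub_U : attr G b U A ⊆ U := fun v ⟨o, ho⟩ => stage_sub_U ho

lemma attr_base {v : G.V} (hU : v ∈ U) (hA : v ∈ A) : v ∈ attr G b U A :=
  ⟨0, by rw [stage]; exact ⟨hU, Or.inl hA⟩⟩

lemma attr_own {v w : G.V} (hU : v ∈ U) (ho : ow G b v) (hE : G.E v w)
    (hw : w ∈ attr G b U A) : v ∈ attr G b U A := by
  obtain ⟨o, hwo⟩ := hw
  exact ⟨o + 1, by
    rw [stage]
    exact ⟨hU, Or.inr (Or.inl ⟨ho, w, hE, ⟨⟨o, by exact lt_add_one o⟩, hwo⟩⟩)⟩⟩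

lemma attr_opp {v : G.V} (hU : v ∈ U) (ho : ow G (!b) v)
    (h : ∀ w, G.E v w → w ∈ U → w ∈ attr G b U A) : v ∈ attr G b U A := by
  classical
  by_cases hne : ∃ w, G.E v w ∧ w ∈ U
  · let ι := {w : G.V // G.E v w ∧ w ∈ U}
    let g : ι → Ordinal := fun w => (h w.1 w.2.1 w.2.2).choose
    have hg : ∀ w : ι, w.1 ∈ stage G b U A (g w) := fun w => (h w.1 w.2.1 w.2.2).choose_spec
    refine ⟨iSup g + 1, ?_⟩
    rw [stage]
    refine ⟨hU, Or.inr (Or.inr ⟨ho, fun w hE hwU => ?_⟩)⟩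
    refine ⟨⟨g ⟨w, hE, hwU⟩, ?_⟩, hg ⟨w, hE, hwU⟩⟩
    exact lt_of_le_of_lt (le_ciSup (Ordinal.bddAbove_range g) _) (lt_add_one _)
  · push_neg at hne
    refine ⟨0, ?_⟩
    rw [stage]
    exact ⟨hU, Or.inr (Or.inr ⟨ho, fun w hE hwU => absurd hwU (hne w hE)⟩)⟩

noncomputable def rankA (G : ParityGame) (b : Bool) (U A : Set G.V) (v : G.V) : Ordinal :=
  if h : v ∈ attr G b U A then
    Ordinal.lt_wf.min {o | v ∈ stage G b U A o} (by obtain ⟨o, ho⟩ := h; exact ⟨o, ho⟩)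
  else 0

lemma rankA_mem {v : G.V} (h : v ∈ attr G b U A) : v ∈ stage G b U A (rankA G b U A v) := by
  rw [rankA, dif_pos h]
  exact Ordinal.lt_wf.min_mem {o | v ∈ stage G b U A o} _

lemma rankA_le {v : G.V} {o : Ordinal} (h : v ∈ stage G b U A o) : rankA G b U A v ≤ o := by
  rw [rankA, dif_pos ⟨o, h⟩]
  exact not_lt.1 (Ordinal.lt_wf.not_lt_min _ h)

lemma attr_own_step {v : G.V} (hv : v ∈ attr G b U A) (hA : v ∉ A) (ho : ow G b v) :
    ∃ w, G.E v w ∧ w ∈ attr G b U A ∧ rankA G b U A w < rankA G b U A v := by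
  have h := rankA_mem hv
  rw [stage] at h
  rcases h.2 with hA' | ⟨_, w, hE, ⟨⟨o', ho'⟩, hw⟩⟩ | ⟨ho', _⟩
  · exact absurd hA' hA
  · exact ⟨w, hE, ⟨o', hw⟩, lt_of_le_of_lt (rankA_le hw) ho'⟩
  · exact absurd ho (ow_not.1 ho')

lemma attr_opp_step {v : G.V} (hv : v ∈ attr G b U A) (hA : v ∉ A) (ho : ow G (!b) v)
    {w : G.V} (hE : G.E v w) (hwU : w ∈ U) :
    w ∈ attr G b U A ∧ rankA G b U A w < rankA G b U A v := by
  have h := rankA_mem hv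
  rw [stage] at h
  rcases h.2 with hA' | ⟨ho', _⟩ | ⟨_, hall⟩
  · exact absurd hA' hA
  · exact absurd ho' (ow_not.1 ho)
  · obtain ⟨⟨o', ho'⟩, hw⟩ := hall w hE hwU
    exact ⟨⟨o', hw⟩, lt_of_le_of_lt (rankA_le hw) ho'⟩

/-- The attractor strategy move. -/
noncomputable def attrMove (G : ParityGame) (b : Bool) (U A : Set G.V) (v : G.V) : G.V :=
  pick v (fun w => G.E v w ∧ w ∈ attr G b U A ∧ rankA G b U A w < rankA G b U A v)

lemma attrMove_spec {v : G.V} (hv : v ∈ attr G b U A) (hA : v ∉ A) (ho : ow G b v) :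
    G.E v (attrMove G b U A v) ∧ attrMove G b U A v ∈ attr G b U A ∧
      rankA G b U A (attrMove G b U A v) < rankA G b U A v :=
  pick_spec v (attr_own_step hv hA ho)

/-- Plays consistent with the attractor strategy reach the target (or end at an
opponent dead end). -/
lemma attr_reach {v₀ : G.V} {p} (hp : G.IsPlayFrom v₀ p)
    (hU : ∀ n x, p n = some x → x ∈ U)
    (hag : ∀ n x, p n = some x → x ∈ attr G b U A → x ∉ A → ow G b x →
      p (n+1) = some (attrMove G b U A x)) :
    ∀ v, v ∈ attr G b U A → ∀ n, p n = some v →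
      ∃ m, n ≤ m ∧ ∃ w, p m = some w ∧ (w ∈ A ∨ (G.Terminal w ∧ ow G (!b) w)) := by
  suffices H : ∀ o v, v ∈ attr G b U A → rankA G b U A v = o → ∀ n, p n = some v →
      ∃ m, n ≤ m ∧ ∃ w, p m = some w ∧ (w ∈ A ∨ (G.Terminal w ∧ ow G (!b) w)) by
    exact fun v hv n hn => H (rankA G b U A v) v hv rfl n hn
  intro o
  induction o using WellFoundedLT.induction with
  | ind o IH =>
    intro v hv hrank n hn
    by_cases hA : v ∈ A
    · exact ⟨n, le_rfl, v, hn, Or.inl hA⟩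
    by_cases how : ow G b v
    · obtain ⟨hE, hw, hrk⟩ := attrMove_spec hv hA how
      have hstep := hag n v hn hv hA how
      obtain ⟨m, hm, res⟩ := IH _ (hrank ▸ hrk) _ hw rfl (n+1) hstep
      exact ⟨m, by omega, res⟩
    · have how' : ow G (!b) v := ow_total how
      by_cases ht : G.Terminal v
      · exact ⟨n, le_rfl, v, hn, Or.inr ⟨ht, how'⟩⟩
      · obtain ⟨w, hE, hw⟩ := (hp.2.2 n v hn).2 ht
        obtain ⟨hwa, hrk⟩ := attr_opp_step hv hA how' hE (hU (n+1) w hw)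
        obtain ⟨m, hm, res⟩ := IH _ (hrank ▸ hrk) _ hwa rfl (n+1) hw
        exact ⟨m, by omega, res⟩

end PDet
namespace PDet
open ParityGame

/-- The core argument: a strategy that follows the attractor towards the top
priority, stays in the opponent's non-winning region, and wins all plays that
eventually avoid the attractor, wins everywhere outside `W`. -/
lemma zielonka_core (G : ParityGame) (b : Bool) (d : ℕ)
    (hlt : ∀ v, G.prio v < d + 1) (hpar : d % 2 = cond b 0 1) (W : Set G.V)
    (hclo : ∀ u, u ∉ W → ow G (!b) u → ∀ w, G.E u w → w ∉ W)
    (hclt : ∀ u, u ∉ W → ow G b u → ¬ G.Terminal u)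
    (σb : G.V → G.V)
    (hσA : ∀ v, v ∈ attr G b Wᶜ {x | x ∈ Wᶜ ∧ G.prio x = d} → G.prio v ≠ d →
      ow G b v → σb v = attrMove G b Wᶜ {x | x ∈ Wᶜ ∧ G.prio x = d} v)
    (hσU : ∀ v, v ∈ Wᶜ → ow G b v → ¬ G.Terminal v → σb v ∈ Wᶜ)
    (htail : ∀ v, v ∈ Wᶜ \ attr G b Wᶜ {x | x ∈ Wᶜ ∧ G.prio x = d} →
      ∀ p, G.IsPlayFrom v p → G.Agrees (ow G b) σb p →
      (∀ n x, p n = some x → x ∈ Wᶜ \ attr G b Wᶜ {x | x ∈ Wᶜ ∧ G.prio x = d}) →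
      WinsPlay G b p) :
    ∀ v, v ∈ Wᶜ → WinsVia G b σb v := by
  classical
  set N : Set G.V := {x | x ∈ Wᶜ ∧ G.prio x = d} with hN
  set Att : Set G.V := attr G b Wᶜ N with hAtt
  intro v hv p hp hag
  -- the play stays outside W
  have inv : ∀ n x, p n = some x → x ∈ Wᶜ := by
    intro n
    induction n with
    | zero =>
      intro x hx
      rw [hp.1] at hx
      obtain rfl : v = x := by simpa using hx
      exact hv
    | succ n ih =>
      intro y hy
      obtain ⟨x, hx⟩ := isPlay_some_of_le hp hy (Nat.le_succ n)
      have hxU := ih x hx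
      have hnt : ¬ G.Terminal x := by
        intro ht; rw [(hp.2.2 n x hx).1 ht] at hy; exact absurd hy (by simp)
      obtain ⟨u, hEu, hu⟩ := (hp.2.2 n x hx).2 hnt
      obtain rfl : u = y := by rw [hu] at hy; exact Option.some.inj hy
      by_cases how : ow G b x
      · have := hag n x hx how hnt
        rw [this] at hu
        obtain rfl : σb x = u := Option.some.inj hu
        exact hσU x hxU how hnt
      · exact hclo x hxU (ow_total how) u hEu
  by_cases hinf : G.Infinite p
  · -- infinite play
    by_cases hA : ∀ N', ∃ n, N' ≤ n ∧ ∃ x, p n = some x ∧ x ∈ Att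
    · -- the attractor, hence priority `d`, is visited infinitely often
      have hoccd : G.OccursInfinitely p d := by
        intro N'
        obtain ⟨n, hn, x, hx, hxA⟩ := hA N'
        have hreach := attr_reach hp inv (fun m y hy hyA hyN hoy => by
          have hEm := (attrMove_spec (U := Wᶜ) (A := N) hyA hyN hoy).1
          have hnt : ¬ G.Terminal y := fun ht => ht _ hEm
          have := hag m y hy hoy hnt
          rw [this, hσA y hyA (fun hd => hyN ⟨inv m y hy, hd⟩) hoy]) x hxA n hx
        obtain ⟨m, hm, w, hw, hres⟩ := hreach
        rcases hres with hwN | ⟨htw, _⟩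
        · exact ⟨m, le_trans hn hm, w, hw, hwN.2⟩
        · exact absurd ((hp.2.2 m w hw).1 htw) (hinf (m+1))
      have hdom : G.Dominant p d := by
        refine ⟨hoccd, fun d' hd' => ?_⟩
        obtain ⟨n, _, u, _, hu⟩ := hd' 0
        have := hlt u
        omega
      exact (winsPlay_iff b p).2 (Or.inr ⟨hinf, d, hdom, hpar⟩)
    · -- the play eventually avoids the attractor
      push_neg at hA
      obtain ⟨N', hN'⟩ := hA
      obtain ⟨x₀, hx₀⟩ : ∃ x, p N' = some x := by
        cases h : p N' with
        | none => exact absurd h (hinf N')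
        | some x => exact ⟨x, rfl⟩
      have hx₀m : x₀ ∈ Wᶜ \ Att := ⟨inv N' x₀ hx₀, hN' N' le_rfl x₀ hx₀⟩
      have hstay : ∀ k y, (fun k => p (N' + k)) k = some y → y ∈ Wᶜ \ Att := by
        intro k y hy
        exact ⟨inv (N' + k) y hy, hN' (N' + k) (Nat.le_add_right _ _) y hy⟩
      have := htail x₀ hx₀m _ (isPlay_shift hp hx₀) (agrees_shift hag N') hstay
      exact winsPlay_shift hp this
  · -- finite play: ends at an opponent dead end
    have hex : ∃ n, p n = none := by
      unfold ParityGame.Infinite at hinf; push_neg at hinf; exact hinf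
    have hpos : 0 < Nat.find hex := by
      rcases Nat.eq_zero_or_pos (Nat.find hex) with h | h
      · have := Nat.find_spec hex; rw [h, hp.1] at this; exact absurd this (by simp)
      · exact h
    obtain ⟨x, hx⟩ : ∃ x, p (Nat.find hex - 1) = some x := by
      cases h : p (Nat.find hex - 1) with
      | none => exact absurd h (Nat.find_min hex (by omega))
      | some x => exact ⟨x, rfl⟩
    have ht : G.Terminal x := by
      by_contra hnt
      obtain ⟨w, _, hw⟩ := (hp.2.2 _ x hx).2 hnt
      rw [show Nat.find hex - 1 + 1 = Nat.find hex from by omega] at hw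
      rw [Nat.find_spec hex] at hw; exact absurd hw (by simp)
    have how : ow G (!b) x := by
      rcases (em (ow G b x)) with h | h
      · exact absurd ht (hclt x (inv _ x hx) h)
      · exact ow_total h
    exact (winsPlay_iff b p).2 (Or.inl ⟨_, x, hx, ht, how⟩)

end PDet
namespace PDet
open ParityGame

theorem master : ∀ (d : ℕ) (G : ParityGame), (∀ v, G.prio v < d) →
    ∃ (f : G.V → Bool) (σ : Bool → G.V → G.V),
      (∀ b, G.ValidFor (ow G b) (σ b)) ∧ ∀ v, WinsVia G (f v) (σ (f v)) v := by
  intro d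
  induction d with
  | zero =>
    intro G h
    exact ⟨fun _ => true, fun _ => id, fun b v hv hnt => absurd (h v) (by omega),
      fun v => absurd (h v) (by omega)⟩
  | succ d IH =>
    intro G hlt
    classical
    set b : Bool := decide (d % 2 = 0) with hb
    have hpar : d % 2 = cond b 0 1 := by
      rcases Nat.mod_two_eq_zero_or_one d with h | h <;> simp [hb, h]
    obtain ⟨τW, hτval, hτwin⟩ := uniform_winning G (!b)
    have hbnn : ∀ v : G.V, ow G (!(!b)) v ↔ ow G b v := fun v => by rw [Bool.not_not]
    have hclo : ∀ u, u ∉ WinRegion G (!b) → ow G (!b) u → ∀ w, G.E u w →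
        w ∉ WinRegion G (!b) := fun u hu ho w hE => closure_own hτval hτwin hu ho hE
    have hclo2 : ∀ u, u ∉ WinRegion G (!b) → ow G b u → ¬ G.Terminal u →
        ∃ w, G.E u w ∧ w ∉ WinRegion G (!b) :=
      fun u hu ho hnt => closure_opp hτval hτwin hu ((hbnn u).2 ho) hnt
    have hclt : ∀ u, u ∉ WinRegion G (!b) → ow G b u → ¬ G.Terminal u :=
      fun u hu ho ht => hu (closure_term hτval hτwin ((hbnn u).2 ho) ht)
    -- notation
    set W : Set G.V := WinRegion G (!b) with hW
    set N : Set G.V := {x | x ∈ Wᶜ ∧ G.prio x = d} with hN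
    set Att : Set G.V := attr G b Wᶜ N with hAtt
    set U₂ : Set G.V := Wᶜ \ Att with hU₂
    have hprio2 : ∀ hne : U₂.Nonempty, ∀ x : (restrictG G U₂ hne).V,
        (restrictG G U₂ hne).prio x < d := by
      intro hne x
      have h1 : G.prio x.1 < d + 1 := hlt x.1
      have h2 : G.prio x.1 ≠ d := fun hd => x.2.2 (attr_base x.2.1 ⟨x.2.1, hd⟩)
      have h3 : (restrictG G U₂ hne).prio x = G.prio x.1 := rfl
      omega
    have hmain : ∀ hne : U₂.Nonempty,
        ∃ (f : (restrictG G U₂ hne).V → Bool)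
          (σ : Bool → (restrictG G U₂ hne).V → (restrictG G U₂ hne).V),
          (∀ b', (restrictG G U₂ hne).ValidFor (ow (restrictG G U₂ hne) b') (σ b')) ∧
          ∀ x, WinsVia (restrictG G U₂ hne) (f x) (σ (f x)) x :=
      fun hne => IH (restrictG G U₂ hne) (hprio2 hne)
    -- terminality matches between `G` and the subgame on `U₂`
    have hterm2 : ∀ (hne : U₂.Nonempty) (y : (restrictG G U₂ hne).V),
        (restrictG G U₂ hne).Terminal y ↔ G.Terminal y.1 := by
      intro hne y
      constructor
      · intro hT
        by_contra hnt
        have hyW : y.1 ∈ Wᶜ := y.2.1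
        have hyA : y.1 ∉ Att := y.2.2
        by_cases how : ow G b y.1
        · obtain ⟨w, hEw, hwW⟩ := hclo2 _ hyW how hnt
          have hwA : w ∉ Att := fun hw => hyA (attr_own hyW how hEw hw)
          exact hT ⟨w, hwW, hwA⟩ hEw
        · have how' : ow G (!b) y.1 := ow_total how
          have hall : ∀ w, G.E y.1 w → w ∈ Wᶜ → w ∈ Att := by
            intro w hEw hwW
            by_contra hwA
            exact hT ⟨w, hwW, hwA⟩ hEw
          exact hyA (attr_opp hyW how' hall)
      · intro hT w hEw
        exact hT w.1 hEw
    -- every vertex of the subgame is won there by player b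
    have hfb : ∀ (hne : U₂.Nonempty) (x : (restrictG G U₂ hne).V),
        (hmain hne).choose x = b := by
      intro hne x
      by_contra hfx
      have hfc : (hmain hne).choose x = !b := Bool.eq_not_iff.mpr hfx
      have hwinc : WinsVia (restrictG G U₂ hne) (!b)
          ((hmain hne).choose_spec.choose (!b)) x := by
        have h := (hmain hne).choose_spec.choose_spec.2 x
        rw [hfc] at h; exact h
      have hvalc := (hmain hne).choose_spec.choose_spec.1 (!b)
      set σc := (hmain hne).choose_spec.choose (!b) with hσc
      -- combined strategy for the opponent in G
      set τd : G.V → G.V := fun u =>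
        if h2 : u ∈ U₂ then (σc ⟨u, h2⟩).1 else if u ∈ W then τW u else eps G u with hτd
      have τd_eq₂ : ∀ u (h2 : u ∈ U₂), τd u = (σc ⟨u, h2⟩).1 := fun u h2 => dif_pos h2
      have τd_eqW : ∀ u, u ∉ U₂ → u ∈ W → τd u = τW u := by
        intro u h2 hw
        show (if h2 : u ∈ U₂ then _ else _) = _
        rw [dif_neg h2, if_pos hw]
      have τd_eqe : ∀ u, u ∉ U₂ → u ∉ W → τd u = eps G u := by
        intro u h2 hw
        show (if h2 : u ∈ U₂ then _ else _) = _
        rw [dif_neg h2, if_neg hw]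
      have hτdval : G.ValidFor (ow G (!b)) τd := by
        intro u ho hnt
        by_cases h2 : u ∈ U₂
        · have hnt2 : ¬ (restrictG G U₂ hne).Terminal ⟨u, h2⟩ :=
            fun hT => hnt ((hterm2 hne ⟨u, h2⟩).1 hT)
          have h := hvalc ⟨u, h2⟩ ((restrict_ow (!b) ⟨u, h2⟩).2 ho) hnt2
          rw [τd_eq₂ u h2]
          exact h
        · by_cases hW' : u ∈ W
          · rw [τd_eqW u h2 hW']; exact hτval u ho hnt
          · rw [τd_eqe u h2 hW']; exact eps_valid G _ u ho hnt
      have hxW : x.1 ∈ W := by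
        refine ⟨τd, hτdval, ?_⟩
        intro p hp hag
        by_cases hstay : ∀ n y, p n = some y → y ∈ U₂
        · refine restrict_winsPlay (hterm2 hne) x.2 hp hstay ?_ hwinc
          intro n z hz hpz hoz hntz
          rw [hag n z hpz hoz hntz, τd_eq₂ z hz]
        · push_neg at hstay
          obtain ⟨n₁, y₁, hy₁, hy₁n⟩ := hstay
          have hexx : ∃ m, ∃ y, p m = some y ∧ y ∉ U₂ := ⟨n₁, y₁, hy₁, hy₁n⟩
          obtain ⟨w, hw, hwn⟩ := Nat.find_spec hexx
          have hbefore : ∀ k, k < Nat.find hexx → ∀ y, p k = some y → y ∈ U₂ := by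
            intro k hk y hy
            by_contra hyn
            exact Nat.find_min hexx hk ⟨y, hy, hyn⟩
          have hm0 : 0 < Nat.find hexx := by
            rcases Nat.eq_zero_or_pos (Nat.find hexx) with h | h
            · obtain ⟨w', hw', hwn'⟩ := Nat.find_spec hexx
              rw [h, hp.1] at hw'
              obtain rfl : x.1 = w' := by simpa using hw'
              exact (hwn' x.2).elim
            · exact h
          obtain ⟨y, hy⟩ : ∃ y, p (Nat.find hexx - 1) = some y :=
            isPlay_some_of_le hp hw (by omega)
          have hyU₂ : y ∈ U₂ := hbefore _ (by omega) y hy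
          have hnt : ¬ G.Terminal y := by
            intro ht
            have h := (hp.2.2 _ y hy).1 ht
            rw [show Nat.find hexx - 1 + 1 = Nat.find hexx from by omega] at h
            rw [h] at hw; exact absurd hw (by simp)
          obtain ⟨w', hEw', hw'⟩ := (hp.2.2 _ y hy).2 hnt
          rw [show Nat.find hexx - 1 + 1 = Nat.find hexx from by omega] at hw'
          rw [hw'] at hw
          obtain rfl : w' = w := Option.some.inj hw
          have hwW : w' ∈ W := by
            by_cases how : ow G (!b) y
            · have h := hag _ y hy how hnt
              rw [show Nat.find hexx - 1 + 1 = Nat.find hexx from by omega] at h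
              rw [h] at hw'
              have := Option.some.inj hw'
              rw [τd_eq₂ y hyU₂] at this
              exact (hwn (this ▸ (σc ⟨y, hyU₂⟩).2)).elim
            · have how' : ow G b y := (hbnn y).1 (ow_total how)
              by_contra hwW
              have hwA : w' ∉ Att := fun hA => hyU₂.2 (attr_own hyU₂.1 how' hEw' hA)
              exact hwn ⟨hwW, hwA⟩
          have hτdW : WinsVia G (!b) τd w' := by
            refine uniform_invariance hτval hτwin ?_ w' hwW
            intro z hz hoz
            exact τd_eqW z (fun h => h.1 hz) hz
          have := hτdW _ (isPlay_shift hp hw') (agrees_shift hag _)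
          exact winsPlay_shift hp this
      exact absurd hxW x.2.1
    -- the combined strategy for player b
    set σb : G.V → G.V := fun u =>
      if hA : u ∈ Att then
        (if G.prio u = d then pick u (fun w => G.E u w ∧ w ∈ Wᶜ) else attrMove G b Wᶜ N u)
      else if h2 : u ∈ U₂ then ((hmain ⟨u, h2⟩).choose_spec.choose b ⟨u, h2⟩).1
      else eps G u with hσb
    have hAU₂ : ∀ u, u ∈ U₂ → u ∉ Att := fun u hu => hu.2
    have σb_eqN : ∀ u, u ∈ Att → G.prio u = d →
        σb u = pick u (fun w => G.E u w ∧ w ∈ Wᶜ) := by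
      intro u hA hd
      show (if hA : u ∈ Att then _ else _) = _
      rw [dif_pos hA, if_pos hd]
    have σb_eqA : ∀ u, u ∈ Att → G.prio u ≠ d → σb u = attrMove G b Wᶜ N u := by
      intro u hA hd
      show (if hA : u ∈ Att then _ else _) = _
      rw [dif_pos hA, if_neg hd]
    have σb_eq₂ : ∀ u (h2 : u ∈ U₂),
        σb u = ((hmain ⟨u, h2⟩).choose_spec.choose b ⟨u, h2⟩).1 := by
      intro u h2
      show (if hA : u ∈ Att then _ else _) = _
      rw [dif_neg (hAU₂ u h2), dif_pos h2]
    have σb_valid : G.ValidFor (ow G b) σb := by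
      intro u ho hnt
      by_cases hA : u ∈ Att
      · have huW : u ∈ Wᶜ := attr_sub_U hA
        by_cases hd : G.prio u = d
        · rw [σb_eqN u hA hd]
          exact (pick_spec u (hclo2 u huW ho hnt)).1
        · rw [σb_eqA u hA hd]
          exact (attrMove_spec hA (fun hmem => hd hmem.2) ho).1
      · by_cases h2 : u ∈ U₂
        · rw [σb_eq₂ u h2]
          have hnt2 : ¬ (restrictG G U₂ ⟨u, h2⟩).Terminal ⟨u, h2⟩ :=
            fun hT => hnt ((hterm2 ⟨u, h2⟩ ⟨u, h2⟩).1 hT)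
          exact (hmain ⟨u, h2⟩).choose_spec.choose_spec.1 b ⟨u, h2⟩
            ((restrict_ow b ⟨u, h2⟩).2 ho) hnt2
        · show G.E u (if hA : u ∈ Att then _ else _)
          rw [dif_neg hA, dif_neg h2]
          exact eps_valid G _ u ho hnt
    have hσU : ∀ v, v ∈ Wᶜ → ow G b v → ¬ G.Terminal v → σb v ∈ Wᶜ := by
      intro v hv ho hnt
      by_cases hA : v ∈ Att
      · by_cases hd : G.prio v = d
        · rw [σb_eqN v hA hd]
          exact (pick_spec v (hclo2 v hv ho hnt)).2
        · rw [σb_eqA v hA hd]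
          exact attr_sub_U (attrMove_spec hA (fun hmem => hd hmem.2) ho).2.1
      · have h2 : v ∈ U₂ := ⟨hv, hA⟩
        rw [σb_eq₂ v h2]
        exact ((hmain ⟨v, h2⟩).choose_spec.choose b ⟨v, h2⟩).2.1
    -- player b wins everywhere outside W
    have hbwins : ∀ v, v ∈ Wᶜ → WinsVia G b σb v := by
      refine zielonka_core G b d hlt hpar W hclo hclt σb
        (fun v hA hd ho => σb_eqA v hA hd) hσU ?_
      intro v hv p hp hag hstay
      have hne : U₂.Nonempty := ⟨v, hv⟩
      have hwv : WinsVia (restrictG G U₂ hne) b ((hmain hne).choose_spec.choose b) ⟨v, hv⟩ := by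
        have h := (hmain hne).choose_spec.choose_spec.2 ⟨v, hv⟩
        rw [hfb hne ⟨v, hv⟩] at h; exact h
      refine restrict_winsPlay (hterm2 hne) hv hp hstay ?_ hwv
      intro n z hz hpz hoz hntz
      rw [hag n z hpz hoz hntz, σb_eq₂ z hz]
    -- assemble
    refine ⟨fun v => if v ∈ W then !b else b, fun b' => if b' = b then σb else τW, ?_, ?_⟩
    · intro b'
      show G.ValidFor (ow G b') (if b' = b then σb else τW)
      by_cases hb' : b' = b
      · rw [if_pos hb', hb']; exact σb_valid
      · rw [if_neg hb', Bool.eq_not_iff.mpr hb']; exact hτval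
    · intro v
      show WinsVia G (if v ∈ W then !b else b)
        (if (if v ∈ W then !b else b) = b then σb else τW) v
      by_cases hvW : v ∈ W
      · rw [if_pos hvW, if_neg (Bool.not_ne_self b)]
        exact hτwin v hvW
      · rw [if_neg hvW, if_pos rfl]
        exact hbwins v hvW

end PDet
namespace PDet
open ParityGame

variable {G : ParityGame}

/-! ### Histories -/

lemma hist_zero {p : ℕ → Option G.V} {v} (h : p 0 = some v) : G.hist p 0 = [v] := by
  show (List.range 1).filterMap p = [v]
  rw [show List.range 1 = [0] from rfl]
  simp [h]

lemma hist_succ {p : ℕ → Option G.V} {n w} (h : p (n+1) = some w) :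
    G.hist p (n+1) = G.hist p n ++ [w] := by
  show (List.range (n+1+1)).filterMap p = _
  rw [List.range_succ, List.filterMap_append]
  simp [ParityGame.hist, h]

lemma hist_last {p : ℕ → Option G.V} {n v} (h : p n = some v) :
    ∃ l, G.hist p n = l ++ [v] := by
  cases n with
  | zero => exact ⟨[], hist_zero h⟩
  | succ n => exact ⟨G.hist p n, hist_succ h⟩

/-! ### A play following a general strategy against a positional one -/

noncomputable def twoSeq (G : ParityGame) (b : Bool) (σg : List G.V → G.V)
    (τ : G.V → G.V) (v₀ : G.V) : ℕ → Option G.V × List G.V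
  | 0 => (some v₀, [v₀])
  | n+1 =>
    match twoSeq G b σg τ v₀ n with
    | (none, h) => (none, h)
    | (some v, h) =>
      if G.Terminal v then (none, h)
      else if ow G b v then (some (σg h), h ++ [σg h]) else (some (τ v), h ++ [τ v])

lemma exists_play_two (G : ParityGame) (b : Bool) (σg : List G.V → G.V) (τ : G.V → G.V)
    (hσ : G.GValidFor (ow G b) σg) (hτ : G.ValidFor (ow G (!b)) τ) (v₀ : G.V) :
    ∃ p, G.IsPlayFrom v₀ p ∧ G.GAgrees (ow G b) σg p ∧ G.Agrees (ow G (!b)) τ p := by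
  classical
  set s := twoSeq G b σg τ v₀ with hs
  set p : ℕ → Option G.V := fun n => (s n).1 with hpdef
  have hunf : ∀ n, s (n+1) = match s n with
      | (none, h) => (none, h)
      | (some v, h) =>
        if G.Terminal v then (none, h)
        else if ow G b v then (some (σg h), h ++ [σg h]) else (some (τ v), h ++ [τ v]) :=
    fun n => rfl
  have hnone : ∀ n, (s n).1 = none → s (n+1) = (none, (s n).2) := by
    intro n h
    rw [hunf n]
    rcases hsn : s n with ⟨o, l⟩
    rw [hsn] at h
    cases o with
    | none => rfl
    | some v => exact absurd h (by simp)
  have hterm : ∀ n v, (s n).1 = some v → G.Terminal v → s (n+1) = (none, (s n).2) := by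
    intro n v h ht
    rw [hunf n]
    rcases hsn : s n with ⟨o, l⟩
    rw [hsn] at h
    cases o with
    | none => exact absurd h (by simp)
    | some w =>
      obtain rfl : w = v := by simpa using h
      simp [ht]
  have hmove : ∀ n v, (s n).1 = some v → ¬ G.Terminal v → ow G b v →
      s (n+1) = (some (σg (s n).2), (s n).2 ++ [σg (s n).2]) := by
    intro n v h ht ho
    rw [hunf n]
    rcases hsn : s n with ⟨o, l⟩
    rw [hsn] at h
    cases o with
    | none => exact absurd h (by simp)
    | some w =>
      obtain rfl : w = v := by simpa using h
      simp [ht, ho]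
  have hmove' : ∀ n v, (s n).1 = some v → ¬ G.Terminal v → ¬ ow G b v →
      s (n+1) = (some (τ v), (s n).2 ++ [τ v]) := by
    intro n v h ht ho
    rw [hunf n]
    rcases hsn : s n with ⟨o, l⟩
    rw [hsn] at h
    cases o with
    | none => exact absurd h (by simp)
    | some w =>
      obtain rfl : w = v := by simpa using h
      simp [ht, ho]
  have hC : ∀ n v, p n = some v → G.hist p n = (s n).2 ∧ ∃ l, (s n).2 = l ++ [v] := by
    intro n
    induction n with
    | zero =>
      intro v hv
      obtain rfl : v₀ = v := by simpa [hpdef, hs, twoSeq] using hv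
      exact ⟨hist_zero hv, [], rfl⟩
    | succ n ih =>
      intro w hw
      obtain ⟨v, hv⟩ : ∃ v, (s n).1 = some v := by
        cases ho : (s n).1 with
        | none =>
          rw [show p (n+1) = (s (n+1)).1 from rfl, hnone n ho] at hw
          exact absurd hw (by simp)
        | some v => exact ⟨v, rfl⟩
      have hnt : ¬ G.Terminal v := by
        intro ht
        rw [show p (n+1) = (s (n+1)).1 from rfl, hterm n v hv ht] at hw
        exact absurd hw (by simp)
      by_cases ho : ow G b v
      · have hst := hmove n v hv hnt ho
        have hw' : σg (s n).2 = w := by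
          rw [show p (n+1) = (s (n+1)).1 from rfl, hst] at hw
          simpa using hw
        have h2 : (s (n+1)).2 = (s n).2 ++ [w] := by rw [hst, hw']
        refine ⟨?_, (s n).2, h2⟩
        rw [hist_succ hw, (ih v hv).1, h2]
      · have hst := hmove' n v hv hnt ho
        have hw' : τ v = w := by
          rw [show p (n+1) = (s (n+1)).1 from rfl, hst] at hw
          simpa using hw
        have h2 : (s (n+1)).2 = (s n).2 ++ [w] := by rw [hst, hw']
        refine ⟨?_, (s n).2, h2⟩
        rw [hist_succ hw, (ih v hv).1, h2]
  refine ⟨p, ⟨rfl, ?_, ?_⟩, ?_, ?_⟩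
  · intro n hn
    show (s (n+1)).1 = none
    rw [hnone n hn]
  · intro n v hv
    constructor
    · intro ht
      show (s (n+1)).1 = none
      rw [hterm n v hv ht]
    · intro hnt
      by_cases ho : ow G b v
      · refine ⟨σg (s n).2, ?_, ?_⟩
        · obtain ⟨_, l, hl⟩ := hC n v hv
          rw [hl]
          exact hσ l v ho hnt
        · show (s (n+1)).1 = _
          rw [hmove n v hv hnt ho]
      · refine ⟨τ v, hτ v (ow_total ho) hnt, ?_⟩
        show (s (n+1)).1 = _
        rw [hmove' n v hv hnt ho]
  · intro n v hv ho hnt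
    show (s (n+1)).1 = _
    rw [hmove n v hv hnt ho, (hC n v hv).1]
  · intro n v hv ho hnt
    show (s (n+1)).1 = _
    rw [hmove' n v hv hnt (ow_not.1 ho)]

/-! ### A play is won by at most one player -/

lemma not_both {v₀ : G.V} {p} (hp : G.IsPlayFrom v₀ p) (b : Bool)
    (h1 : WinsPlay G b p) (h2 : WinsPlay G (!b) p) : False := by
  rw [winsPlay_iff] at h1 h2
  rcases h1 with ⟨n, v, hv, ht, ho⟩ | ⟨hinf, d, hdom, hpar⟩
  · rcases h2 with ⟨m, w, hw, ht2, ho2⟩ | ⟨hinf, _⟩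
    · rcases lt_trichotomy n m with h | h | h
      · have := isPlay_none_mono hp ((hp.2.2 n v hv).1 ht) (by omega : n+1 ≤ m)
        rw [this] at hw; exact absurd hw (by simp)
      · subst h
        rw [hv] at hw
        obtain rfl : v = w := Option.some.inj hw
        rw [Bool.not_not] at ho2
        exact (ow_not.1 ho) ho2
      · have := isPlay_none_mono hp ((hp.2.2 m w hw).1 ht2) (by omega : m+1 ≤ n)
        rw [this] at hv; exact absurd hv (by simp)
    · exact hinf (n+1) ((hp.2.2 n v hv).1 ht)
  · rcases h2 with ⟨m, w, hw, ht2, ho2⟩ | ⟨_, d', hdom', hpar'⟩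
    · exact hinf (m+1) ((hp.2.2 m w hw).1 ht2)
    · obtain rfl : d = d' := le_antisymm (hdom'.2 d hdom.1) (hdom.2 d' hdom'.1)
      cases b <;> simp at hpar hpar' <;> omega

/-! ### Positional strategies as general strategies -/

lemma pos_general (b : Bool) {σ : G.V → G.V} (hval : G.ValidFor (ow G b) σ) {v₀ : G.V}
    (hwin : WinsVia G b σ v₀) :
    ∃ σg : List G.V → G.V, G.GValidFor (ow G b) σg ∧
      ∀ p, G.IsPlayFrom v₀ p → G.GAgrees (ow G b) σg p → WinsPlay G b p := by
  refine ⟨fun l => σ (l.getLastD v₀), ?_, ?_⟩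
  · intro l v ho hnt
    show G.E v (σ ((l ++ [v]).getLastD v₀))
    rw [List.getLastD_concat]
    exact hval v ho hnt
  · intro p hp hag
    refine hwin p hp ?_
    intro n v hv ho hnt
    have h := hag n v hv ho hnt
    obtain ⟨l, hl⟩ := hist_last hv
    rw [h, hl]
    show some (σ ((l ++ [v]).getLastD v₀)) = some (σ v)
    rw [List.getLastD_concat]

end PDet

/-- Positional determinacy of parity games (with finitely many
priorities): from each position exactly one player has a winning strategy, and the
winner always has a positional winning strategy. -/
theorem parity_positional_determinacy (G : ParityGame)
    (hfin : (Set.range G.prio).Finite) (v₀ : G.V) :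
    Xor' (G.EvenWinsFrom v₀) (G.OddWinsFrom v₀) ∧
    (G.GEvenWinsFrom v₀ → G.EvenWinsFrom v₀) ∧
    (G.GOddWinsFrom v₀ → G.OddWinsFrom v₀) := by
  classical
  obtain ⟨d₀, hd₀⟩ := hfin.bddAbove
  have hlt : ∀ v, G.prio v < d₀ + 1 := fun v => Nat.lt_succ_of_le (hd₀ ⟨v, rfl⟩)
  obtain ⟨f, σfam, hval, hwin⟩ := PDet.master (d₀ + 1) G hlt
  -- definitional identifications
  have hE : G.EvenWinsFrom v₀ ↔
      ∃ σ, G.ValidFor (PDet.ow G true) σ ∧ PDet.WinsVia G true σ v₀ := Iff.rfl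
  have hO : G.OddWinsFrom v₀ ↔
      ∃ σ, G.ValidFor (PDet.ow G false) σ ∧ PDet.WinsVia G false σ v₀ := Iff.rfl
  -- both players cannot win (even with general strategies for one of them)
  have hnotboth : ¬ (G.EvenWinsFrom v₀ ∧ G.OddWinsFrom v₀) := by
    rintro ⟨hEw, hOw⟩
    obtain ⟨σ, hσv, hσw⟩ := hE.1 hEw
    obtain ⟨τ, hτv, hτw⟩ := hO.1 hOw
    obtain ⟨σg, hgv, hgw⟩ := PDet.pos_general true hσv hσw
    obtain ⟨p, hp, hga, ha⟩ := PDet.exists_play_two G true σg τ hgv hτv v₀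
    exact PDet.not_both hp true (hgw p hp hga) (hτw p hp ha)
  have hGE : G.GEvenWinsFrom v₀ → ¬ G.OddWinsFrom v₀ := by
    rintro ⟨σg, hgv, hgw⟩ hOw
    obtain ⟨τ, hτv, hτw⟩ := hO.1 hOw
    obtain ⟨p, hp, hga, ha⟩ := PDet.exists_play_two G true σg τ hgv hτv v₀
    exact PDet.not_both hp true (hgw p hp hga) (hτw p hp ha)
  have hGO : G.GOddWinsFrom v₀ → ¬ G.EvenWinsFrom v₀ := by
    rintro ⟨σg, hgv, hgw⟩ hEw
    obtain ⟨σ, hσv, hσw⟩ := hE.1 hEw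
    obtain ⟨p, hp, hga, ha⟩ := PDet.exists_play_two G false σg σ hgv hσv v₀
    exact PDet.not_both hp false (hgw p hp hga) (hσw p hp ha)
  cases hf : f v₀ with
  | true =>
    have hEw : G.EvenWinsFrom v₀ := by
      refine hE.2 ⟨σfam true, hval true, ?_⟩
      have h := hwin v₀
      rw [hf] at h
      exact h
    exact ⟨Or.inl ⟨hEw, fun hOw => hnotboth ⟨hEw, hOw⟩⟩,
      fun _ => hEw, fun hgo => (hGO hgo hEw).elim⟩
  | false =>
    have hOw : G.OddWinsFrom v₀ := by
      refine hO.2 ⟨σfam false, hval false, ?_⟩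
      have h := hwin v₀
      rw [hf] at h
      exact h
    exact ⟨Or.inr ⟨hOw, fun hEw => hnotboth ⟨hEw, hOw⟩⟩,
      fun hge => (hGE hge hOw).elim, fun _ => hOw⟩
end

section
/- The formula Ψ = μX.νY.μZ.(A ∧ ◇Y) ∨ (B ∧ ◇(Z ∧ φ)) ∨ (C ∧ □X), where φ ∈ Π^μ_2 contains no occurrence of X, Y, Z, is equivalent to the Π^μ_2 formula μX.(A ∧ ◇X) ∨ (B ∧ ◇(X ∧ φ)) ∨ (C ∧ □X) ∨ νY.μZ.(A ∧ ◇Y) ∨ (B ∧ ◇(Z ∧ φ)) ∨ (C ∧ □⊥). -/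
attribute [local instance 10] Classical.propDecidable

/-! ### Auxiliary lattice and semantic lemmas -/

section Aux

def muS {S : Type*} (f : Set S → Set S) : Set S := ⋂₀ {A | f A ⊆ A}
def nuS {S : Type*} (f : Set S → Set S) : Set S := ⋃₀ {A | A ⊆ f A}

lemma muS_le {S : Type*} {f : Set S → Set S} {A : Set S} (h : f A ⊆ A) : muS f ⊆ A :=
  fun _ hs => hs A h

lemma le_nuS {S : Type*} {f : Set S → Set S} {A : Set S} (h : A ⊆ f A) : A ⊆ nuS f :=
  fun s hs => ⟨A, h, hs⟩

lemma muS_fix {S : Type*} {f : Set S → Set S} (hf : ∀ ⦃A B⦄, A ⊆ B → f A ⊆ f B) :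
    f (muS f) = muS f := by
  have h1 : f (muS f) ⊆ muS f := by
    intro s hs A hA
    exact hA (hf (muS_le hA) hs)
  have h2 : muS f ⊆ f (muS f) := muS_le (hf h1)
  exact Set.Subset.antisymm h1 h2

lemma nuS_fix {S : Type*} {f : Set S → Set S} (hf : ∀ ⦃A B⦄, A ⊆ B → f A ⊆ f B) :
    f (nuS f) = nuS f := by
  have h1 : nuS f ⊆ f (nuS f) := by
    rintro s ⟨A, hA, hsA⟩
    exact hf (le_nuS hA) (hA hsA)
  exact Set.Subset.antisymm (le_nuS (hf h1)) h1

lemma muS_mono {S : Type*} {f g : Set S → Set S} (h : ∀ A, f A ⊆ g A) : muS f ⊆ muS g := by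
  intro s hs A hA
  exact hs A (Set.Subset.trans (h A) hA)

lemma nuS_mono {S : Type*} {f g : Set S → Set S} (h : ∀ A, f A ⊆ g A) : nuS f ⊆ nuS g := by
  rintro s ⟨A, hA, hsA⟩
  exact ⟨A, Set.Subset.trans hA (h A), hsA⟩

lemma muS_congr {S : Type*} {f g : Set S → Set S} (h : ∀ A, f A = g A) : muS f = muS g := by
  have : f = g := funext h
  rw [this]

lemma nuS_congr {S : Type*} {f g : Set S → Set S} (h : ∀ A, f A = g A) : nuS f = nuS g := by
  have : f = g := funext h
  rw [this]

lemma sat_mu_def (T : KripkeTree) (X : ℕ) (ψ : MuFormula) (e : ℕ → Set T.S) :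
    T.sat (.mu X ψ) e = muS (fun A => T.sat ψ (Function.update e X A)) := rfl

lemma sat_nu_def (T : KripkeTree) (X : ℕ) (ψ : MuFormula) (e : ℕ → Set T.S) :
    T.sat (.nu X ψ) e = nuS (fun A => T.sat ψ (Function.update e X A)) := rfl

lemma sat_mono (T : KripkeTree) :
    ∀ (ψ : MuFormula) (e e' : ℕ → Set T.S), (∀ n, e n ⊆ e' n) →
      T.sat ψ e ⊆ T.sat ψ e' := by
  intro ψ
  induction ψ with
  | top => intro e e' h; exact le_rfl
  | bot => intro e e' h; exact le_rfl
  | prop P => intro e e' h; exact le_rfl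
  | nprop P => intro e e' h; exact le_rfl
  | var X => intro e e' h; exact h X
  | and φ ψ ih1 ih2 =>
      intro e e' h
      exact Set.inter_subset_inter (ih1 e e' h) (ih2 e e' h)
  | or φ ψ ih1 ih2 =>
      intro e e' h
      exact Set.union_subset_union (ih1 e e' h) (ih2 e e' h)
  | dia φ ih =>
      rintro e e' h s ⟨t, hE, ht⟩
      exact ⟨t, hE, ih e e' h ht⟩
  | box φ ih =>
      intro e e' h s hs t hE
      exact ih e e' h (hs t hE)
  | mu X φ ih =>
      intro e e' h
      apply muS_mono
      intro A
      apply ih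
      intro n
      by_cases hn : n = X
      · subst hn; simp
      · simp [Function.update_of_ne hn]; exact h n
  | nu X φ ih =>
      intro e e' h
      apply nuS_mono
      intro A
      apply ih
      intro n
      by_cases hn : n = X
      · subst hn; simp
      · simp [Function.update_of_ne hn]; exact h n

lemma sat_congr (T : KripkeTree) :
    ∀ (ψ : MuFormula) (e e' : ℕ → Set T.S), (∀ n ∈ ψ.freeVars, e n = e' n) →
      T.sat ψ e = T.sat ψ e' := by
  intro ψ
  induction ψ with
  | top => intro e e' h; rfl
  | bot => intro e e' h; rfl
  | prop P => intro e e' h; rfl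
  | nprop P => intro e e' h; rfl
  | var X => intro e e' h; exact h X (by simp [MuFormula.freeVars])
  | and φ ψ ih1 ih2 =>
      intro e e' h
      have h1 : ∀ n ∈ φ.freeVars, e n = e' n := fun n hn =>
        h n (by simp [MuFormula.freeVars]; exact Or.inl hn)
      have h2 : ∀ n ∈ ψ.freeVars, e n = e' n := fun n hn =>
        h n (by simp [MuFormula.freeVars]; exact Or.inr hn)
      show T.sat φ e ∩ T.sat ψ e = _
      rw [ih1 e e' h1, ih2 e e' h2]; rfl
  | or φ ψ ih1 ih2 =>
      intro e e' h
      have h1 : ∀ n ∈ φ.freeVars, e n = e' n := fun n hn =>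
        h n (by simp [MuFormula.freeVars]; exact Or.inl hn)
      have h2 : ∀ n ∈ ψ.freeVars, e n = e' n := fun n hn =>
        h n (by simp [MuFormula.freeVars]; exact Or.inr hn)
      show T.sat φ e ∪ T.sat ψ e = _
      rw [ih1 e e' h1, ih2 e e' h2]; rfl
  | dia φ ih =>
      intro e e' h
      show {s | ∃ t, T.E s t ∧ t ∈ T.sat φ e} = _
      rw [ih e e' (fun n hn => h n hn)]; rfl
  | box φ ih =>
      intro e e' h
      show {s | ∀ t, T.E s t → t ∈ T.sat φ e} = _
      rw [ih e e' (fun n hn => h n hn)]; rfl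
  | mu X φ ih =>
      intro e e' h
      rw [sat_mu_def, sat_mu_def]
      apply muS_congr
      intro A
      apply ih
      intro n hn
      by_cases hnX : n = X
      · subst hnX; simp
      · rw [Function.update_of_ne hnX, Function.update_of_ne hnX]
        exact h n (by simp [MuFormula.freeVars, Finset.mem_erase]; exact ⟨hnX, hn⟩)
  | nu X φ ih =>
      intro e e' h
      rw [sat_nu_def, sat_nu_def]
      apply nuS_congr
      intro A
      apply ih
      intro n hn
      by_cases hnX : n = X
      · subst hnX; simp
      · rw [Function.update_of_ne hnX, Function.update_of_ne hnX]
        exact h n (by simp [MuFormula.freeVars, Finset.mem_erase]; exact ⟨hnX, hn⟩)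

end Aux


section Aux2

def diaS (T : KripkeTree) (A : Set T.S) : Set T.S := {s | ∃ t, T.E s t ∧ t ∈ A}
def boxS (T : KripkeTree) (A : Set T.S) : Set T.S := {s | ∀ t, T.E s t → t ∈ A}

/-- The abstract body operator of the formulas in question. -/
def F1 (T : KripkeTree) (P X Y Z : Set T.S) : Set T.S :=
  ({s | T.label s 0} ∩ diaS T Y ∪ {s | T.label s 1} ∩ diaS T (Z ∩ P)) ∪
    {s | T.label s 2} ∩ boxS T X

lemma F1_mono (T : KripkeTree) (P : Set T.S) {X X' Y Y' Z Z' : Set T.S}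
    (hX : X ⊆ X') (hY : Y ⊆ Y') (hZ : Z ⊆ Z') : F1 T P X Y Z ⊆ F1 T P X' Y' Z' := by
  intro s hs
  simp only [F1, diaS, boxS, Set.mem_union, Set.mem_inter_iff, Set.mem_setOf_eq] at hs ⊢
  rcases hs with (⟨h0, t, hE, ht⟩ | ⟨h1, t, hE, ht, htP⟩) | ⟨h2, hb⟩
  · exact Or.inl (Or.inl ⟨h0, t, hE, hY ht⟩)
  · exact Or.inl (Or.inr ⟨h1, t, hE, hZ ht, htP⟩)
  · exact Or.inr ⟨h2, fun t hE => hX (hb t hE)⟩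

lemma eval_body (T : KripkeTree) (φ : MuFormula) (e : ℕ → Set T.S) :
    T.sat (.or (.or (.and (.prop 0) (.dia (.var 11)))
                  (.and (.prop 1) (.dia (.and (.var 12) φ))))
             (.and (.prop 2) (.box (.var 10)))) e
    = F1 T (T.sat φ e) (e 10) (e 11) (e 12) := rfl

lemma eval_bodyW (T : KripkeTree) (φ : MuFormula) (e : ℕ → Set T.S) :
    T.sat (.or (.or (.and (.prop 0) (.dia (.var 11)))
                  (.and (.prop 1) (.dia (.and (.var 12) φ))))
             (.and (.prop 2) (.box .bot))) e
    = F1 T (T.sat φ e) ∅ (e 11) (e 12) := rfl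

lemma eval_bodyR (T : KripkeTree) (φ ω : MuFormula) (e : ℕ → Set T.S) :
    T.sat (.or (.or (.or (.and (.prop 0) (.dia (.var 10)))
                       (.and (.prop 1) (.dia (.and (.var 10) φ))))
                  (.and (.prop 2) (.box (.var 10))))
             ω) e
    = F1 T (T.sat φ e) (e 10) (e 10) (e 10) ∪ T.sat ω e := rfl

end Aux2

/-- With propositions `A = 0`, `B = 1`, `C = 2` and variables
`X = 10`, `Y = 11`, `Z = 12`, the formula
`Ψ = μX.νY.μZ.(A ∧ ◇Y) ∨ (B ∧ ◇(Z ∧ φ)) ∨ (C ∧ □X)`, where `φ ∈ Π^μ_2` contains no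
occurrence of `X, Y, Z`, is equivalent to the `Π^μ_2` formula
`μX.(A ∧ ◇X) ∨ (B ∧ ◇(X ∧ φ)) ∨ (C ∧ □X) ∨ νY.μZ.(A ∧ ◇Y) ∨ (B ∧ ◇(Z ∧ φ)) ∨ (C ∧ □⊥)`. -/
theorem example_formula_semantically_pi2 (φ : MuFormula)
    (hφ : HasIndex φ (Finset.Icc 1 2))
    (hX : 10 ∉ φ.freeVars ∧ 10 ∉ φ.boundVars)
    (hY : 11 ∉ φ.freeVars ∧ 11 ∉ φ.boundVars)
    (hZ : 12 ∉ φ.freeVars ∧ 12 ∉ φ.boundVars) :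
    MuEquiv
      (.mu 10 (.nu 11 (.mu 12
        (.or (.or (.and (.prop 0) (.dia (.var 11)))
                  (.and (.prop 1) (.dia (.and (.var 12) φ))))
             (.and (.prop 2) (.box (.var 10)))))))
      (.mu 10
        (.or (.or (.or (.and (.prop 0) (.dia (.var 10)))
                       (.and (.prop 1) (.dia (.and (.var 10) φ))))
                  (.and (.prop 2) (.box (.var 10))))
             (.nu 11 (.mu 12
               (.or (.or (.and (.prop 0) (.dia (.var 11)))
                         (.and (.prop 1) (.dia (.and (.var 12) φ))))
                    (.and (.prop 2) (.box .bot))))))) := by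
  obtain ⟨hX1, -⟩ := hX
  obtain ⟨hY1, -⟩ := hY
  obtain ⟨hZ1, -⟩ := hZ
  intro T
  classical
  set e0 : ℕ → Set T.S := fun _ => ∅ with he0
  set P : Set T.S := T.sat φ e0 with hP
  -- congruence helper for φ
  have hcong : ∀ e : ℕ → Set T.S, (∀ n, n ≠ 10 → n ≠ 11 → n ≠ 12 → e n = ∅) →
      T.sat φ e = P := by
    intro e he
    apply sat_congr
    intro n hn
    have h10 : n ≠ 10 := by rintro rfl; exact hX1 hn
    have h11 : n ≠ 11 := by rintro rfl; exact hY1 hn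
    have h12 : n ≠ 12 := by rintro rfl; exact hZ1 hn
    rw [he n h10 h11 h12]
  -- abstract operators
  set N : Set T.S → Set T.S := fun X => nuS (fun Y => muS (fun Z => F1 T P X Y Z)) with hNdef
  set W : Set T.S := N ∅ with hWdef
  set R : Set T.S := muS (fun X => F1 T P X X X ∪ W) with hRdef
  set L : Set T.S := muS N with hLdef
  -- monotonicity facts
  have hmuZmono : ∀ X Y Y' : Set T.S, Y ⊆ Y' →
      muS (fun Z => F1 T P X Y Z) ⊆ muS (fun Z => F1 T P X Y' Z) := by
    intro X Y Y' h
    exact muS_mono (fun Z => F1_mono T P le_rfl h le_rfl)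
  have hNmono : ∀ ⦃X X' : Set T.S⦄, X ⊆ X' → N X ⊆ N X' := by
    intro X X' h
    exact nuS_mono (fun Y => muS_mono (fun Z => F1_mono T P h le_rfl le_rfl))
  -- fixpoint facts
  have hNfixmu : ∀ X : Set T.S, muS (fun Z => F1 T P X (N X) Z) = N X := by
    intro X
    exact nuS_fix (fun Y Y' h => hmuZmono X Y Y' h)
  have hNfix1 : ∀ X : Set T.S, F1 T P X (N X) (N X) = N X := by
    intro X
    have := muS_fix (f := fun Z => F1 T P X (N X) Z)
      (fun Z Z' h => F1_mono T P le_rfl le_rfl h)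
    rw [hNfixmu X] at this
    exact this
  have hLfix : N L = L := muS_fix hNmono
  have hRfix : F1 T P R R R ∪ W = R :=
    muS_fix (fun X X' h => Set.union_subset_union_left W (F1_mono T P h h h))
  have hWR : W ⊆ R := le_trans Set.subset_union_right hRfix.le
  have hFR : F1 T P R R R ⊆ R := le_trans Set.subset_union_left hRfix.le
  -- direction R ⊆ L
  have hRL : R ⊆ L := by
    apply muS_le
    apply Set.union_subset
    · have : F1 T P L L L = L := by
        have := hNfix1 L
        rw [hLfix] at this
        exact this
      exact this.le
    · calc W = N ∅ := hWdef
        _ ⊆ N L := hNmono (Set.empty_subset L)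
        _ = L := hLfix
  -- direction L ⊆ R : show N R ⊆ R
  have hLR : L ⊆ R := by
    apply muS_le
    set V : Set T.S := N R with hVdef
    set D : Set T.S := muS (fun Z => F1 T P ∅ (V \ R) Z) with hDdef
    have hDfix : F1 T P ∅ (V \ R) D = D :=
      muS_fix (fun Z Z' h => F1_mono T P le_rfl le_rfl h)
    -- Step 1: V ⊆ R ∪ D
    have hstep1 : V ⊆ R ∪ D := by
      have hVmu : muS (fun Z => F1 T P R V Z) = V := hNfixmu R
      rw [← hVmu]
      apply muS_le
      intro s hs
      simp only [F1, diaS, boxS, Set.mem_union, Set.mem_inter_iff, Set.mem_setOf_eq] at hs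
      rcases hs with (⟨h0, t, hE, ht⟩ | ⟨h1, t, hE, ht, htP⟩) | ⟨h2, hb⟩
      · by_cases htR : t ∈ R
        · left
          apply hFR
          simp only [F1, diaS, boxS, Set.mem_union, Set.mem_inter_iff, Set.mem_setOf_eq]
          exact Or.inl (Or.inl ⟨h0, t, hE, htR⟩)
        · right
          rw [← hDfix]
          simp only [F1, diaS, boxS, Set.mem_union, Set.mem_inter_iff, Set.mem_setOf_eq]
          exact Or.inl (Or.inl ⟨h0, t, hE, ht, htR⟩)
      · rcases ht with htR | htD
        · left
          apply hFR
          simp only [F1, diaS, boxS, Set.mem_union, Set.mem_inter_iff, Set.mem_setOf_eq]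
          exact Or.inl (Or.inr ⟨h1, t, hE, htR, htP⟩)
        · right
          rw [← hDfix]
          simp only [F1, diaS, boxS, Set.mem_union, Set.mem_inter_iff, Set.mem_setOf_eq]
          exact Or.inl (Or.inr ⟨h1, t, hE, htD, htP⟩)
      · left
        apply hFR
        simp only [F1, diaS, boxS, Set.mem_union, Set.mem_inter_iff, Set.mem_setOf_eq]
        exact Or.inr ⟨h2, hb⟩
    -- Step 2
    have hstep2 : V \ R ⊆ D := by
      intro s hs
      rcases hstep1 hs.1 with h | h
      · exact absurd h hs.2
      · exact h
    -- Step 3: D ⊆ W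
    have hstep3 : D ⊆ W := by
      apply le_nuS (f := fun Y => muS (fun Z => F1 T P ∅ Y Z))
      calc D = muS (fun Z => F1 T P ∅ (V \ R) Z) := hDdef
        _ ⊆ muS (fun Z => F1 T P ∅ D Z) :=
            muS_mono (fun Z => F1_mono T P le_rfl hstep2 le_rfl)
    -- conclude
    calc N R = V := hVdef.symm
      _ ⊆ R ∪ D := hstep1
      _ ⊆ R ∪ W := Set.union_subset_union_right R hstep3
      _ ⊆ R := Set.union_subset le_rfl hWR
  have hmain : L = R := Set.Subset.antisymm hLR hRL
  -- evaluate the formulas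
  have hupdcond : ∀ (e : ℕ → Set T.S), (∀ n, n ≠ 10 → n ≠ 11 → n ≠ 12 → e n = ∅) →
      ∀ (m : ℕ) (A : Set T.S), (m = 10 ∨ m = 11 ∨ m = 12) →
      (∀ n, n ≠ 10 → n ≠ 11 → n ≠ 12 → Function.update e m A n = ∅) := by
    intro e he m A hm n h10 h11 h12
    have : n ≠ m := by rcases hm with rfl | rfl | rfl <;> assumption
    rw [Function.update_of_ne this]
    exact he n h10 h11 h12
  have he0cond : ∀ n, n ≠ 10 → n ≠ 11 → n ≠ 12 → e0 n = ∅ := by intro n _ _ _; rfl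
  -- evaluation of the LHS formula
  have hLeval : T.sat (.mu 10 (.nu 11 (.mu 12
        (.or (.or (.and (.prop 0) (.dia (.var 11)))
                  (.and (.prop 1) (.dia (.and (.var 12) φ))))
             (.and (.prop 2) (.box (.var 10))))))) e0 = L := by
    rw [hLdef, sat_mu_def]
    apply muS_congr
    intro X
    rw [sat_nu_def, hNdef]
    apply nuS_congr
    intro Y
    rw [sat_mu_def]
    apply muS_congr
    intro Z
    rw [eval_body]
    have hc1 := hupdcond e0 he0cond 10 X (Or.inl rfl)
    have hc2 := hupdcond _ hc1 11 Y (Or.inr (Or.inl rfl))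
    have hc3 := hupdcond _ hc2 12 Z (Or.inr (Or.inr rfl))
    rw [hcong _ hc3]
    simp [Function.update]
  -- evaluation of the W formula
  have hWeval : ∀ (e : ℕ → Set T.S), (∀ n, n ≠ 10 → n ≠ 11 → n ≠ 12 → e n = ∅) →
      T.sat (.nu 11 (.mu 12
               (.or (.or (.and (.prop 0) (.dia (.var 11)))
                         (.and (.prop 1) (.dia (.and (.var 12) φ))))
                    (.and (.prop 2) (.box .bot))))) e = W := by
    intro e he
    rw [sat_nu_def, hWdef, hNdef]
    apply nuS_congr
    intro Y
    rw [sat_mu_def]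
    apply muS_congr
    intro Z
    rw [eval_bodyW]
    have hc2 := hupdcond _ he 11 Y (Or.inr (Or.inl rfl))
    have hc3 := hupdcond _ hc2 12 Z (Or.inr (Or.inr rfl))
    rw [hcong _ hc3]
    simp [Function.update]
  -- evaluation of the RHS formula
  have hReval : T.sat (.mu 10
      (.or (.or (.or (.and (.prop 0) (.dia (.var 10)))
                       (.and (.prop 1) (.dia (.and (.var 10) φ))))
                  (.and (.prop 2) (.box (.var 10))))
             (.nu 11 (.mu 12
               (.or (.or (.and (.prop 0) (.dia (.var 11)))
                         (.and (.prop 1) (.dia (.and (.var 12) φ))))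
                    (.and (.prop 2) (.box .bot))))))) e0 = R := by
    rw [hRdef, sat_mu_def]
    apply muS_congr
    intro X
    rw [eval_bodyR]
    have hc1 := hupdcond e0 he0cond 10 X (Or.inl rfl)
    rw [hcong _ hc1, hWeval _ hc1, Function.update_self]
  show T.Models _ ↔ T.Models _
  unfold KripkeTree.Models
  rw [show (fun _ => (∅ : Set T.S)) = e0 from rfl, hLeval, hReval, hmain]
end
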